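/- arXiv:nlin/0003034 — 15 statements merged into one kernel-verified Lean document; each statement's English description precedes it below -/
import Mathlib

section
/- Let G be a Z2-graded Lie algebra over a field k, i.e. G = G0 ⊕ G1 as vector spaces with [G0,G0] ⊆ G0, [G0,G1] ⊆ G1, [G1,G1] ⊆ G0. Let G₋ be a Lie subalgebra of G such that G = G0 ⊕ G₋ as vector spaces, and let π₊ : G → G0 denote the linear projection onto G0 along G₋. Define a bilinear multiplication on G1 by X*Y = [π₊(X), Y] (which lies in G1). Then for all X, Y, Z, V ∈ G1 the identities (2.6): [X,Y,Z] + [Y,Z,X] + [Z,X,Y] = 0 and (2.7): V*[X,Y,Z] = [V*X,Y,Z] + [X,V*Y,Z] + [X,Y,V*Z] hold; that is, G1 with the operation * is a G-algebra. -/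
/-! For `X, Y ∈ G1` the skew part `π₊⁅π₊X, Y⁆ - π₊⁅π₊Y, X⁆` differs from `⁅X, Y⁆ + ⁅π₊X, π₊Y⁆` by
`π₊⁅X - π₊X, Y - π₊Y⁆`, which vanishes because `G₋` is a subalgebra. Hence the ternary operation
is `[X, Y, Z] = ⁅⁅X, Y⁆, Z⁆`, so (2.6) is the Jacobi identity and (2.7) says that `ad (π₊V)` is a
derivation. -/

section Projection

variable {R M : Type*} [Ring R] [AddCommGroup M] [Module R M] {A B : Submodule R M}
  {π : M →ₗ[R] M}

theorem map_eq_self_of_mem_of_disjoint (hAB : Disjoint A B) (hπA : ∀ x, π x ∈ A)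
    (hπB : ∀ x, x - π x ∈ B) {a : M} (ha : a ∈ A) : π a = a :=
  (sub_eq_zero.mp (Submodule.disjoint_def.mp hAB _ (sub_mem ha (hπA a)) (hπB a))).symm

theorem map_eq_zero_of_mem_of_disjoint (hAB : Disjoint A B) (hπA : ∀ x, π x ∈ A)
    (hπB : ∀ x, x - π x ∈ B) {b : M} (hb : b ∈ B) : π b = 0 := by
  have hπb : π b ∈ B := by simpa using sub_mem hb (hπB b)
  exact Submodule.disjoint_def.mp hAB _ (hπA b) hπb

theorem map_add_eq_of_mem_of_disjoint (hAB : Disjoint A B) (hπA : ∀ x, π x ∈ A)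
    (hπB : ∀ x, x - π x ∈ B) {a b : M} (ha : a ∈ A) (hb : b ∈ B) : π (a + b) = a := by
  rw [map_add, map_eq_self_of_mem_of_disjoint hAB hπA hπB ha,
    map_eq_zero_of_mem_of_disjoint hAB hπA hπB hb, add_zero]

end Projection

section LieRing

variable {L : Type*} [LieRing L]

theorem lie_lie_add_lie_lie_add_lie_lie (x y z : L) :
    ⁅⁅x, y⁆, z⁆ + ⁅⁅y, z⁆, x⁆ + ⁅⁅z, x⁆, y⁆ = 0 := by
  rw [← lie_skew ⁅x, y⁆ z, ← lie_skew ⁅y, z⁆ x, ← lie_skew ⁅z, x⁆ y,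
    ← neg_add, ← neg_add, neg_eq_zero]
  exact lie_jacobi z x y

theorem leibniz_lie_lie (d x y z : L) :
    ⁅d, ⁅⁅x, y⁆, z⁆⁆ = ⁅⁅⁅d, x⁆, y⁆, z⁆ + ⁅⁅x, ⁅d, y⁆⁆, z⁆ + ⁅⁅x, y⁆, ⁅d, z⁆⁆ := by
  rw [leibniz_lie d ⁅x, y⁆ z, leibniz_lie d x y, add_lie]

end LieRing

section ProjectedProduct

variable {k G : Type*} [CommRing k] [LieRing G] [LieAlgebra k G] {G0 G1 Gm : Submodule k G}
  {π : G →ₗ[k] G}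

theorem map_lie_sub_lie_eq (hG0m : Disjoint G0 Gm)
    (h00 : ∀ x ∈ G0, ∀ y ∈ G0, ⁅x, y⁆ ∈ G0) (h11 : ∀ x ∈ G1, ∀ y ∈ G1, ⁅x, y⁆ ∈ G0)
    (hGmsub : ∀ x ∈ Gm, ∀ y ∈ Gm, ⁅x, y⁆ ∈ Gm)
    (hπ0 : ∀ x, π x ∈ G0) (hπm : ∀ x, x - π x ∈ Gm) {X Y : G} (hX : X ∈ G1) (hY : Y ∈ G1) :
    π (⁅π X, Y⁆ - ⁅π Y, X⁆) = ⁅X, Y⁆ + ⁅π X, π Y⁆ := by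
  have hsplit : ⁅π X, Y⁆ - ⁅π Y, X⁆ = (⁅X, Y⁆ + ⁅π X, π Y⁆) + -⁅X - π X, Y - π Y⁆ := by
    simp only [lie_sub, sub_lie, ← lie_skew (π Y) X]
    abel
  rw [hsplit]
  exact map_add_eq_of_mem_of_disjoint hG0m hπ0 hπm
    (add_mem (h11 X hX Y hY) (h00 _ (hπ0 X) _ (hπ0 Y))) (neg_mem (hGmsub _ (hπm X) _ (hπm Y)))

theorem projected_ternary_eq_lie_lie (hG0m : Disjoint G0 Gm)
    (h00 : ∀ x ∈ G0, ∀ y ∈ G0, ⁅x, y⁆ ∈ G0) (h11 : ∀ x ∈ G1, ∀ y ∈ G1, ⁅x, y⁆ ∈ G0)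
    (hGmsub : ∀ x ∈ Gm, ∀ y ∈ Gm, ⁅x, y⁆ ∈ Gm)
    (hπ0 : ∀ x, π x ∈ G0) (hπm : ∀ x, x - π x ∈ Gm) {X Y : G} (hX : X ∈ G1) (hY : Y ∈ G1)
    (Z : G) :
    (⁅π ⁅π X, Y⁆, Z⁆ - ⁅π X, ⁅π Y, Z⁆⁆) - (⁅π ⁅π Y, X⁆, Z⁆ - ⁅π Y, ⁅π X, Z⁆⁆) = ⁅⁅X, Y⁆, Z⁆ := by
  rw [sub_sub_sub_comm, ← sub_lie, ← map_sub,
    map_lie_sub_lie_eq hG0m h00 h11 hGmsub hπ0 hπm hX hY, add_lie, lie_lie (π X) (π Y)]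
  abel

end ProjectedProduct

theorem stmt_0_general {k G : Type*} [Field k] [LieRing G] [LieAlgebra k G]
    (G0 G1 Gm : Submodule k G)
    (h00 : ∀ x ∈ G0, ∀ y ∈ G0, ⁅x, y⁆ ∈ G0)
    (h01 : ∀ x ∈ G0, ∀ y ∈ G1, ⁅x, y⁆ ∈ G1)
    (h11 : ∀ x ∈ G1, ∀ y ∈ G1, ⁅x, y⁆ ∈ G0)
    (hGmsub : ∀ x ∈ Gm, ∀ y ∈ Gm, ⁅x, y⁆ ∈ Gm)
    (hG0m : IsCompl G0 Gm)
    (π : G →ₗ[k] G)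
    (hπ0 : ∀ x, π x ∈ G0)
    (hπm : ∀ x, x - π x ∈ Gm)
    (mul : G → G → G)
    (hmul : ∀ X Y, mul X Y = ⁅π X, Y⁆)
    (As : G → G → G → G)
    (hAs : ∀ X Y Z, As X Y Z = mul (mul X Y) Z - mul X (mul Y Z))
    (tri : G → G → G → G)
    (htri : ∀ X Y Z, tri X Y Z = As X Y Z - As Y X Z) :
    ∀ X ∈ G1, ∀ Y ∈ G1, ∀ Z ∈ G1, ∀ V ∈ G1,
      tri X Y Z + tri Y Z X + tri Z X Y = 0 ∧
      mul V (tri X Y Z) =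
        tri (mul V X) Y Z + tri X (mul V Y) Z + tri X Y (mul V Z) := by
  have htri_eq : ∀ X ∈ G1, ∀ Y ∈ G1, ∀ Z, tri X Y Z = ⁅⁅X, Y⁆, Z⁆ := fun X hX Y hY Z => by
    simp only [htri, hAs, hmul]
    exact projected_ternary_eq_lie_lie hG0m.disjoint h00 h11 hGmsub hπ0 hπm hX hY Z
  have hmul_mem : ∀ V, ∀ X ∈ G1, mul V X ∈ G1 := fun V X hX => by
    rw [hmul]
    exact h01 _ (hπ0 V) _ hX
  intro X hX Y hY Z hZ V _
  constructor
  · rw [htri_eq X hX Y hY, htri_eq Y hY Z hZ, htri_eq Z hZ X hX]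
    exact lie_lie_add_lie_lie_add_lie_lie X Y Z
  · rw [htri_eq X hX Y hY, htri_eq _ (hmul_mem V X hX) Y hY, htri_eq X hX _ (hmul_mem V Y hY),
      htri_eq X hX Y hY]
    simp only [hmul]
    exact leibniz_lie_lie (π V) X Y Z

/-- For a Z2-graded Lie algebra `G = G0 ⊕ G1` and a Lie subalgebra
complement `G₋` with `G = G0 ⊕ G₋`, the operation `X*Y = [π₊(X), Y]` on `G1`
satisfies the G-algebra identities (2.6) and (2.7). -/
theorem stmt_0 {k G : Type*} [Field k] [LieRing G] [LieAlgebra k G]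
    (G0 G1 Gm : Submodule k G)
    (hG01 : IsCompl G0 G1)
    (h00 : ∀ x ∈ G0, ∀ y ∈ G0, ⁅x, y⁆ ∈ G0)
    (h01 : ∀ x ∈ G0, ∀ y ∈ G1, ⁅x, y⁆ ∈ G1)
    (h11 : ∀ x ∈ G1, ∀ y ∈ G1, ⁅x, y⁆ ∈ G0)
    (hGmsub : ∀ x ∈ Gm, ∀ y ∈ Gm, ⁅x, y⁆ ∈ Gm)
    (hG0m : IsCompl G0 Gm)
    (π : G →ₗ[k] G)
    (hπ0 : ∀ x, π x ∈ G0)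
    (hπm : ∀ x, x - π x ∈ Gm)
    (mul : G → G → G)
    (hmul : ∀ X Y, mul X Y = ⁅π X, Y⁆)
    (As : G → G → G → G)
    (hAs : ∀ X Y Z, As X Y Z = mul (mul X Y) Z - mul X (mul Y Z))
    (tri : G → G → G → G)
    (htri : ∀ X Y Z, tri X Y Z = As X Y Z - As Y X Z) :
    ∀ X ∈ G1, ∀ Y ∈ G1, ∀ Z ∈ G1, ∀ V ∈ G1,
      tri X Y Z + tri Y Z X + tri Z X Y = 0 ∧
      mul V (tri X Y Z) =
        tri (mul V X) Y Z + tri X (mul V Y) Z + tri X Y (mul V Z) :=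
  stmt_0_general G0 G1 Gm h00 h01 h11 hGmsub hG0m π hπ0 hπm mul hmul As hAs tri htri
end

section
/- Let G be a Z2-graded Lie algebra over a field k (G = G0 ⊕ G1 as vector spaces, [G0,G0] ⊆ G0, [G0,G1] ⊆ G1, [G1,G1] ⊆ G0), and let G₋ be a Lie subalgebra of G with G = G0 ⊕ G₋ as vector spaces, with π₊ : G → G0 the projection onto G0 along G₋. Define X*Y = [π₊(X), Y] on G1, and let [X,Y,Z] = As(X,Y,Z) − As(Y,X,Z) where As(X,Y,Z) = (X*Y)*Z − X*(Y*Z). Then for all X, Y, Z ∈ G1 one has [X,Y,Z] = [[X,Y],Z], where the right-hand side is computed with the Lie bracket of G. -/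
/-!
Write `X = π X + X₋` with `X₋ ∈ G₋`. Since `G₋` is a subalgebra, `π` kills `⁅X₋, Y₋⁆`, and since
`π` fixes `⁅X, Y⁆, ⁅π X, π Y⁆ ∈ G0`, this gives `⁅X, Y⁆ = π (X * Y - Y * X) - ⁅π X, π Y⁆`.
On the other hand `As X Y Z - As Y X Z = ⁅π (X * Y - Y * X), Z⁆ - ⁅⁅π X, π Y⁆, Z⁆`, the second
term coming from `⁅π X, ⁅π Y, Z⁆⁆ - ⁅π Y, ⁅π X, Z⁆⁆` by the Jacobi identity.
-/

section Projection

variable {R M : Type*} [Ring R] [AddCommGroup M] [Module R M]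
  {M0 Mm : Submodule R M} {π : M →ₗ[R] M}

theorem proj_eq_self_of_mem (hM0m : Disjoint M0 Mm) (hπ0 : ∀ x, π x ∈ M0)
    (hπm : ∀ x, x - π x ∈ Mm) {x : M} (hx : x ∈ M0) : π x = x :=
  (sub_eq_zero.mp <|
    (Submodule.disjoint_def.mp hM0m) _ (M0.sub_mem hx (hπ0 x)) (hπm x)).symm

theorem proj_eq_zero_of_mem (hM0m : Disjoint M0 Mm) (hπ0 : ∀ x, π x ∈ M0)
    (hπm : ∀ x, x - π x ∈ Mm) {x : M} (hx : x ∈ Mm) : π x = 0 := by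
  have hπx : π x ∈ Mm := by
    simpa using Mm.sub_mem hx (hπm x)
  exact (Submodule.disjoint_def.mp hM0m) _ (hπ0 x) hπx

end Projection

section LieProjection

variable {k G : Type*} [CommRing k] [LieRing G] [LieAlgebra k G]
  {G0 Gm : Submodule k G} {π : G →ₗ[k] G}

theorem lie_eq_proj_lie_sub_proj_lie_sub_lie_proj (hG0m : Disjoint G0 Gm)
    (hπ0 : ∀ x, π x ∈ G0) (hπm : ∀ x, x - π x ∈ Gm)
    (h00 : ∀ x ∈ G0, ∀ y ∈ G0, ⁅x, y⁆ ∈ G0) (hGm : ∀ x ∈ Gm, ∀ y ∈ Gm, ⁅x, y⁆ ∈ Gm)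
    {X Y : G} (hXY : ⁅X, Y⁆ ∈ G0) :
    ⁅X, Y⁆ = π ⁅π X, Y⁆ - π ⁅π Y, X⁆ - ⁅π X, π Y⁆ := by
  have hminus : π ⁅X - π X, Y - π Y⁆ = 0 :=
    proj_eq_zero_of_mem hG0m hπ0 hπm (hGm _ (hπm X) _ (hπm Y))
  have hexpand : ⁅X - π X, Y - π Y⁆ = ⁅X, Y⁆ + ⁅π X, π Y⁆ - (⁅π X, Y⁆ - ⁅π Y, X⁆) := by
    rw [lie_sub, sub_lie, sub_lie, ← lie_skew (π Y) X]
    abel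
  rw [hexpand, map_sub, map_add, map_sub, proj_eq_self_of_mem hG0m hπ0 hπm hXY,
    proj_eq_self_of_mem hG0m hπ0 hπm (h00 _ (hπ0 X) _ (hπ0 Y))] at hminus
  rw [← sub_eq_zero, ← hminus]
  abel

end LieProjection

theorem stmt_2_general {k G : Type*} [Field k] [LieRing G] [LieAlgebra k G]
    (G0 G1 Gm : Submodule k G)
    (h00 : ∀ x ∈ G0, ∀ y ∈ G0, ⁅x, y⁆ ∈ G0)
    (h11 : ∀ x ∈ G1, ∀ y ∈ G1, ⁅x, y⁆ ∈ G0)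
    (hGmsub : ∀ x ∈ Gm, ∀ y ∈ Gm, ⁅x, y⁆ ∈ Gm)
    (hG0m : IsCompl G0 Gm)
    (π : G →ₗ[k] G)
    (hπ0 : ∀ x, π x ∈ G0)
    (hπm : ∀ x, x - π x ∈ Gm)
    (mul : G → G → G)
    (hmul : ∀ X Y, mul X Y = ⁅π X, Y⁆)
    (As : G → G → G → G)
    (hAs : ∀ X Y Z, As X Y Z = mul (mul X Y) Z - mul X (mul Y Z))
    (tri : G → G → G → G)
    (htri : ∀ X Y Z, tri X Y Z = As X Y Z - As Y X Z) :
    ∀ X ∈ G1, ∀ Y ∈ G1, ∀ Z ∈ G1, tri X Y Z = ⁅⁅X, Y⁆, Z⁆ := by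
  intro X hX Y hY Z _
  have hXY := lie_eq_proj_lie_sub_proj_lie_sub_lie_proj hG0m.disjoint hπ0 hπm h00 hGmsub
    (h11 X hX Y hY)
  simp only [htri, hAs, hmul]
  rw [hXY, sub_lie, sub_lie, lie_lie]
  abel

/-- In the setting of a Z2-graded Lie algebra `G = G0 ⊕ G1` with a Lie
subalgebra complement `G₋` of `G0` and `X*Y = [π₊(X),Y]` on `G1`, the ternary
operation `[X,Y,Z] = As(X,Y,Z) − As(Y,X,Z)` satisfies `[X,Y,Z] = [[X,Y],Z]`
(right-hand side computed with the Lie bracket of `G`) for `X, Y, Z ∈ G1`. -/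
theorem stmt_2 {k G : Type*} [Field k] [LieRing G] [LieAlgebra k G]
    (G0 G1 Gm : Submodule k G)
    (hG01 : IsCompl G0 G1)
    (h00 : ∀ x ∈ G0, ∀ y ∈ G0, ⁅x, y⁆ ∈ G0)
    (h01 : ∀ x ∈ G0, ∀ y ∈ G1, ⁅x, y⁆ ∈ G1)
    (h11 : ∀ x ∈ G1, ∀ y ∈ G1, ⁅x, y⁆ ∈ G0)
    (hGmsub : ∀ x ∈ Gm, ∀ y ∈ Gm, ⁅x, y⁆ ∈ Gm)
    (hG0m : IsCompl G0 Gm)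
    (π : G →ₗ[k] G)
    (hπ0 : ∀ x, π x ∈ G0)
    (hπm : ∀ x, x - π x ∈ Gm)
    (mul : G → G → G)
    (hmul : ∀ X Y, mul X Y = ⁅π X, Y⁆)
    (As : G → G → G → G)
    (hAs : ∀ X Y Z, As X Y Z = mul (mul X Y) Z - mul X (mul Y Z))
    (tri : G → G → G → G)
    (htri : ∀ X Y Z, tri X Y Z = As X Y Z - As Y X Z) :
    ∀ X ∈ G1, ∀ Y ∈ G1, ∀ Z ∈ G1, tri X Y Z = ⁅⁅X, Y⁆, Z⁆ :=
  stmt_2_general G0 G1 Gm h00 h11 hGmsub hG0m π hπ0 hπm mul hmul As hAs tri htri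
end

section
/- Let A be a vector space over a field k with a bilinear multiplication *, let L_X ∈ End(A) denote left multiplication L_X(Y) = X*Y, and let S be the Lie subalgebra of End(A) (with commutator bracket) generated by {L_X : X ∈ A}. On pairs (A,X) ∈ End(A) × A define the bracket [(A,X),(B,Y)] = ([A,B] − [L_X,L_Y] + L_{X*Y} − L_{Y*X}, A(Y) − B(X)). Then the Jacobi identity holds for all triples of pairs whose endomorphism components lie in S if and only if the algebra (A,*) satisfies identity (2.6): [X,Y,Z] + [Y,Z,X] + [Z,X,Y] = 0 and identity (2.7): V*[X,Y,Z] = [V*X,Y,Z] + [X,V*Y,Z] + [X,Y,V*Z] for all V,X,Y,Z ∈ A, where [X,Y,Z] = As(X,Y,Z) − As(Y,X,Z) and As(X,Y,Z) = (X*Y)*Z − X*(Y*Z). -/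
/-!
Write `D X Y := L (X * Y) - L (Y * X) - ⁅L X, L Y⁆`, so that `D X Y Z = [X, Y, Z]` and the bracket
reads `⁅(F, X), (G, Y)⁆ = (⁅F, G⁆ + D X Y, F Y - G X)`. Expanding the Jacobiator of
`(F, X), (G, Y), (H, Z)`, the Jacobi identity of `End A` and the antisymmetry of `D` leave as
`End A`-component the sum over `T ∈ {F, G, H}` of the defects `D (T Y) Z + D Y (T Z) - ⁅T, D Y Z⁆`
(with the matching pair of vectors), and as `A`-component the cyclic sum of `[X, Y, Z]`.
The endomorphisms with vanishing defect form a Lie subalgebra, and (2.7) says exactly that it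
contains every `L V`; so under (2.6) and (2.7) both components vanish on `S`. Conversely, the
triples `(0, X), (0, Y), (0, Z)` and `(L V, 0), (0, X), (0, Y)` give back (2.6) and (2.7).
-/

attribute [local instance] LieRing.ofAssociativeRing

theorem Module.End.lie_def_apply {R M : Type*} [Semiring R] [AddCommGroup M] [Module R M]
    (F G : Module.End R M) (X : M) : ⁅F, G⁆ X = F (G X) - G (F X) :=
  rfl

namespace GAlgebra

variable {R A : Type*} [CommRing R] [AddCommGroup A] [Module R A]

def associator (mul : A →ₗ[R] A →ₗ[R] A) : A →ₗ[R] A →ₗ[R] Module.End R A :=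
  mul.compr₂ mul - (LinearMap.mul R (Module.End R A)).compl₁₂ mul mul

def skewAssociator (mul : A →ₗ[R] A →ₗ[R] A) : A →ₗ[R] A →ₗ[R] Module.End R A :=
  associator mul - (associator mul).flip

@[simp]
theorem associator_apply (mul : A →ₗ[R] A →ₗ[R] A) (X Y Z : A) :
    associator mul X Y Z = mul (mul X Y) Z - mul X (mul Y Z) :=
  rfl

@[simp]
theorem skewAssociator_apply (mul : A →ₗ[R] A →ₗ[R] A) (X Y Z : A) :
    skewAssociator mul X Y Z = associator mul X Y Z - associator mul Y X Z :=
  rfl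

theorem skewAssociator_eq (mul : A →ₗ[R] A →ₗ[R] A) (X Y : A) :
    skewAssociator mul X Y = mul (mul X Y) - mul (mul Y X) - ⁅mul X, mul Y⁆ := by
  ext Z
  simp only [skewAssociator_apply, associator_apply, LinearMap.sub_apply,
    Module.End.lie_def_apply]
  abel

theorem skewAssociator_swap (mul : A →ₗ[R] A →ₗ[R] A) (X Y : A) :
    skewAssociator mul Y X = -skewAssociator mul X Y := by
  simp only [skewAssociator, LinearMap.sub_apply, neg_sub]
  rfl

theorem lie_eq_add_iff_forall_apply (t : A →ₗ[R] A →ₗ[R] Module.End R A)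
    (T : Module.End R A) (Y Z : A) :
    ⁅T, t Y Z⁆ = t (T Y) Z + t Y (T Z) ↔
      ∀ W, T (t Y Z W) = t (T Y) Z W + t Y (T Z) W + t Y Z (T W) := by
  simp only [LinearMap.ext_iff, Module.End.lie_def_apply, LinearMap.add_apply,
    sub_eq_iff_eq_add]

/-- The derivations of the ternary product `(X, Y, Z) ↦ t X Y Z`, written as an identity in
`Module.End R A` (see `lie_eq_add_iff_forall_apply`). -/
def tripleDerivations (t : A →ₗ[R] A →ₗ[R] Module.End R A) :
    LieSubalgebra R (Module.End R A) where
  carrier := {T | ∀ Y Z, ⁅T, t Y Z⁆ = t (T Y) Z + t Y (T Z)}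
  zero_mem' := by simp
  add_mem' {S T} hS hT Y Z := by
    simp only [add_lie, LinearMap.add_apply, map_add, hS Y Z, hT Y Z]
    abel
  smul_mem' c T hT Y Z := by
    simp only [smul_lie, LinearMap.smul_apply, map_smul, hT Y Z, smul_add]
  lie_mem' {S T} hS hT Y Z := by
    rw [lie_lie, hS, hT, lie_add, lie_add, hS, hS, hT, hT, Module.End.lie_def_apply,
      Module.End.lie_def_apply, map_sub, map_sub, LinearMap.sub_apply]
    abel

theorem mem_tripleDerivations_iff {t : A →ₗ[R] A →ₗ[R] Module.End R A} {T : Module.End R A} :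
    T ∈ tripleDerivations t ↔ ∀ Y Z, ⁅T, t Y Z⁆ = t (T Y) Z + t Y (T Z) :=
  Iff.rfl

theorem mul_mem_tripleDerivations_iff (mul : A →ₗ[R] A →ₗ[R] A) (V : A) :
    mul V ∈ tripleDerivations (skewAssociator mul) ↔
      ∀ X Y Z, mul V (skewAssociator mul X Y Z) = skewAssociator mul (mul V X) Y Z +
        skewAssociator mul X (mul V Y) Z + skewAssociator mul X Y (mul V Z) := by
  simp only [mem_tripleDerivations_iff, lie_eq_add_iff_forall_apply]

def pairBracket (t : A →ₗ[R] A →ₗ[R] Module.End R A) (p q : Module.End R A × A) :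
    Module.End R A × A :=
  (⁅p.1, q.1⁆ + t p.2 q.2, p.1 q.2 - q.1 p.2)

theorem pairBracket_jacobi {t : A →ₗ[R] A →ₗ[R] Module.End R A} (ht : ∀ X Y, t Y X = -t X Y)
    (F G H : Module.End R A) (X Y Z : A) :
    pairBracket t (pairBracket t (F, X) (G, Y)) (H, Z) +
        pairBracket t (pairBracket t (G, Y) (H, Z)) (F, X) +
        pairBracket t (pairBracket t (H, Z) (F, X)) (G, Y) =
      (t (F Y) Z + t Y (F Z) - ⁅F, t Y Z⁆ + (t (G Z) X + t Z (G X) - ⁅G, t Z X⁆) +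
          (t (H X) Y + t X (H Y) - ⁅H, t X Y⁆),
        t X Y Z + t Y Z X + t Z X Y) := by
  ext1
  · simp only [pairBracket, Prod.fst_add, Ring.lie_def, map_sub, LinearMap.sub_apply, ht (G X),
      ht (H Y), ht (F Z)]
    noncomm_ring
  · simp only [pairBracket, Prod.snd_add, LinearMap.add_apply, map_sub, Module.End.lie_def_apply]
    abel

theorem pairBracket_jacobi_iff (mul : A →ₗ[R] A →ₗ[R] A) :
    (∀ p q r : Module.End R A × A, p.1 ∈ LieSubalgebra.lieSpan R _ (Set.range mul) →
        q.1 ∈ LieSubalgebra.lieSpan R _ (Set.range mul) →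
        r.1 ∈ LieSubalgebra.lieSpan R _ (Set.range mul) →
        pairBracket (skewAssociator mul) (pairBracket (skewAssociator mul) p q) r +
          pairBracket (skewAssociator mul) (pairBracket (skewAssociator mul) q r) p +
          pairBracket (skewAssociator mul) (pairBracket (skewAssociator mul) r p) q = 0) ↔
      (∀ X Y Z, skewAssociator mul X Y Z + skewAssociator mul Y Z X +
          skewAssociator mul Z X Y = 0) ∧
        ∀ V, mul V ∈ tripleDerivations (skewAssociator mul) := by
  have jacobi := pairBracket_jacobi (skewAssociator_swap mul)
  have zero_mem := (LieSubalgebra.lieSpan R (Module.End R A) (Set.range mul)).zero_mem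
  constructor
  · intro H
    refine ⟨fun X Y Z => ?_, fun V X Y => ?_⟩
    · simpa [jacobi] using congrArg Prod.snd (H (0, X) (0, Y) (0, Z) zero_mem zero_mem zero_mem)
    · have hV : mul V ∈ LieSubalgebra.lieSpan R _ (Set.range mul) :=
        LieSubalgebra.subset_lieSpan (Set.mem_range_self V)
      have := congrArg Prod.fst (H (mul V, 0) (0, X) (0, Y) hV zero_mem zero_mem)
      simp only [jacobi, Prod.fst_zero, LinearMap.zero_apply, map_zero, lie_self, add_zero,
        sub_self] at this
      exact (sub_eq_zero.1 this).symm
  · rintro ⟨h26, h27⟩ ⟨F, X⟩ ⟨G, Y⟩ ⟨H, Z⟩ hF hG hH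
    have hder :
        LieSubalgebra.lieSpan R _ (Set.range mul) ≤ tripleDerivations (skewAssociator mul) :=
      LieSubalgebra.lieSpan_le.2 (Set.range_subset_iff.2 h27)
    rw [jacobi, mem_tripleDerivations_iff.1 (hder hF), mem_tripleDerivations_iff.1 (hder hG),
      mem_tripleDerivations_iff.1 (hder hH), h26]
    simp

end GAlgebra

/-- For an algebra `(A,*)` with left multiplications `L_X`, `S` the Lie
subalgebra of `End(A)` generated by the `L_X`, and the bracket
`[(A,X),(B,Y)] = ([A,B] − [L_X,L_Y] + L_{X*Y} − L_{Y*X}, A(Y) − B(X))` on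
`End(A) × A`, the Jacobi identity holds on all triples with endomorphism
components in `S` iff `(A,*)` satisfies the G-algebra identities (2.6) and (2.7). -/
theorem stmt_3 {k A : Type*} [Field k] [AddCommGroup A] [Module k A]
    (mul : A →ₗ[k] A →ₗ[k] A)
    (S : LieSubalgebra k (Module.End k A))
    (hS : S = LieSubalgebra.lieSpan k (Module.End k A) (Set.range fun X => mul X))
    (br : Module.End k A × A → Module.End k A × A → Module.End k A × A)
    (hbr : ∀ p q, br p q =
      (⁅p.1, q.1⁆ - ⁅mul p.2, mul q.2⁆ + mul (mul p.2 q.2) - mul (mul q.2 p.2),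
       p.1 q.2 - q.1 p.2))
    (As : A → A → A → A)
    (hAs : ∀ X Y Z, As X Y Z = mul (mul X Y) Z - mul X (mul Y Z))
    (tri : A → A → A → A)
    (htri : ∀ X Y Z, tri X Y Z = As X Y Z - As Y X Z) :
    (∀ p q r : Module.End k A × A, p.1 ∈ S → q.1 ∈ S → r.1 ∈ S →
        br (br p q) r + br (br q r) p + br (br r p) q = 0) ↔
      ((∀ X Y Z, tri X Y Z + tri Y Z X + tri Z X Y = 0) ∧
       (∀ V X Y Z, mul V (tri X Y Z) =
          tri (mul V X) Y Z + tri X (mul V Y) Z + tri X Y (mul V Z))) := by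
  have hbr' : br = GAlgebra.pairBracket (GAlgebra.skewAssociator mul) := by
    funext p q
    rw [hbr, GAlgebra.pairBracket, GAlgebra.skewAssociator_eq]
    congr 1
    abel
  have htri' : tri = fun X Y Z => GAlgebra.skewAssociator mul X Y Z := by
    funext X Y Z
    simp [htri, hAs]
  subst hS hbr' htri'
  simpa only [GAlgebra.mul_mem_tripleDerivations_iff] using GAlgebra.pairBracket_jacobi_iff mul
end

section
/- Let G be a Z2-graded Lie algebra over a field k (G = G0 ⊕ G1 as vector spaces, [G0,G0] ⊆ G0, [G0,G1] ⊆ G1) with [G1,G1] = 0. Let G₋ be a subspace (not necessarily a subalgebra) with G = G0 ⊕ G₋ as vector spaces, let π₊ : G → G0 be the projection onto G0 along G₋, and let H be the linear span of {π₊([a,b]) : a, b ∈ G₋}. Assume [H, G0] ⊆ G0 and [H, G₋] ⊆ G₋. Define X*Y = [π₊(X), Y] for X, Y ∈ G1 (which lies in G1). Then the operation * satisfies identity (3.1): [V,X,Y*Z] = [V,X,Y]*Z + Y*[V,X,Z] for all V, X, Y, Z ∈ G1; that is, G1 is an SS-algebra. -/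
/-!
Writing `L_X = ad (π X)`, one has `As(V,X,·) = L_{V*X} - L_V L_X`, so by the Jacobi
identity `[V,X,·] = ad d` with `d = π(V*X - X*V) - ⁅π V, π X⁆`. Splitting `V` and `X` into their
`G0`- and `G₋`-parts and using `⁅V, X⁆ = 0` gives `d = -π⁅V - π V, X - π X⁆ ∈ H`. Elements of `H`
preserve both `G0` and `G₋`, so `ad d` commutes with `π`, and a derivation commuting with `π` is a
derivation of `X * Y = ⁅π X, Y⁆`.
-/

section Projection

variable {k G : Type*} [CommRing k] [AddCommGroup G] [Module k G]
  {P M : Submodule k G} {π : G →ₗ[k] G}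

theorem proj_eq_self_of_mem_s4 (hPM : Disjoint P M) (hπP : ∀ x, π x ∈ P)
    (hπM : ∀ x, x - π x ∈ M) {x : G} (hx : x ∈ P) : π x = x :=
  (sub_eq_zero.mp ((Submodule.disjoint_def.mp hPM) _ (P.sub_mem hx (hπP x)) (hπM x))).symm

theorem proj_eq_zero_of_mem_s4 (hPM : Disjoint P M) (hπP : ∀ x, π x ∈ P)
    (hπM : ∀ x, x - π x ∈ M) {x : G} (hx : x ∈ M) : π x = 0 := by
  have hπx : π x ∈ M := by simpa using M.sub_mem hx (hπM x)
  exact (Submodule.disjoint_def.mp hPM) _ (hπP x) hπx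

end Projection

section ProjectedProduct

variable {k G : Type*} [CommRing k] [LieRing G] [LieAlgebra k G] (π : G →ₗ[k] G)

def projMul (X Y : G) : G := ⁅π X, Y⁆

def projAssoc (X Y Z : G) : G := projMul π (projMul π X Y) Z - projMul π X (projMul π Y Z)

def projTri (X Y Z : G) : G := projAssoc π X Y Z - projAssoc π Y X Z

theorem projTri_eq_lie (V X W : G) :
    projTri π V X W = ⁅π (⁅π V, X⁆ - ⁅π X, V⁆) - ⁅π V, π X⁆, W⁆ := by
  simp only [projTri, projAssoc, projMul, map_sub, sub_lie, lie_lie]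
  abel

theorem lie_projMul_of_commute {d : G} (hd : ∀ y, π ⁅d, y⁆ = ⁅d, π y⁆) (Y Z : G) :
    ⁅d, projMul π Y Z⁆ = projMul π ⁅d, Y⁆ Z + projMul π Y ⁅d, Z⁆ := by
  simp only [projMul, hd]
  exact leibniz_lie d (π Y) Z

theorem projTri_projMul_of_commute {V X d : G} (hd : ∀ y, π ⁅d, y⁆ = ⁅d, π y⁆)
    (hVX : ∀ W, projTri π V X W = ⁅d, W⁆) (Y Z : G) :
    projTri π V X (projMul π Y Z) =
      projMul π (projTri π V X Y) Z + projMul π Y (projTri π V X Z) := by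
  simp only [hVX, lie_projMul_of_commute π hd]

theorem lie_sub_proj_sub_proj (V X : G) :
    ⁅V - π V, X - π X⁆ = ⁅V, X⁆ + ⁅π V, π X⁆ - (⁅π V, X⁆ - ⁅π X, V⁆) := by
  rw [← lie_skew (π X) V]
  simp only [sub_lie, lie_sub]
  abel

end ProjectedProduct

theorem proj_lie_eq_lie_proj {k G : Type*} [CommRing k] [LieRing G] [LieAlgebra k G]
    {P M : Submodule k G} {π : G →ₗ[k] G} (hPM : Disjoint P M) (hπP : ∀ x, π x ∈ P)
    (hπM : ∀ x, x - π x ∈ M) {h : G} (hP : ∀ x ∈ P, ⁅h, x⁆ ∈ P) (hM : ∀ x ∈ M, ⁅h, x⁆ ∈ M)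
    (y : G) : π ⁅h, y⁆ = ⁅h, π y⁆ := by
  have hsplit : ⁅h, y⁆ = ⁅h, π y⁆ + ⁅h, y - π y⁆ := by rw [← lie_add, add_sub_cancel]
  rw [hsplit, map_add, proj_eq_self_of_mem_s4 hPM hπP hπM (hP _ (hπP y)),
    proj_eq_zero_of_mem_s4 hPM hπP hπM (hM _ (hπM y)), add_zero]

theorem stmt_4_general {k G : Type*} [Field k] [LieRing G] [LieAlgebra k G]
    (G0 G1 Gm : Submodule k G)
    (h00 : ∀ x ∈ G0, ∀ y ∈ G0, ⁅x, y⁆ ∈ G0)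
    (h11 : ∀ x ∈ G1, ∀ y ∈ G1, ⁅x, y⁆ = 0)
    (hG0m : IsCompl G0 Gm)
    (π : G →ₗ[k] G)
    (hπ0 : ∀ x, π x ∈ G0)
    (hπm : ∀ x, x - π x ∈ Gm)
    (H : Submodule k G)
    (hH : H = Submodule.span k {x | ∃ a ∈ Gm, ∃ b ∈ Gm, x = π ⁅a, b⁆})
    (hH0 : ∀ h ∈ H, ∀ x ∈ G0, ⁅h, x⁆ ∈ G0)
    (hHm : ∀ h ∈ H, ∀ x ∈ Gm, ⁅h, x⁆ ∈ Gm)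
    (mul : G → G → G)
    (hmul : ∀ X Y, mul X Y = ⁅π X, Y⁆)
    (As : G → G → G → G)
    (hAs : ∀ X Y Z, As X Y Z = mul (mul X Y) Z - mul X (mul Y Z))
    (tri : G → G → G → G)
    (htri : ∀ X Y Z, tri X Y Z = As X Y Z - As Y X Z) :
    ∀ V ∈ G1, ∀ X ∈ G1, ∀ Y ∈ G1, ∀ Z ∈ G1,
      tri V X (mul Y Z) = mul (tri V X Y) Z + mul Y (tri V X Z) := by
  obtain rfl : mul = projMul π := funext fun X => funext (hmul X)
  obtain rfl : As = projAssoc π := funext fun X => funext fun Y => funext (hAs X Y)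
  obtain rfl : tri = projTri π := funext fun X => funext fun Y => funext (htri X Y)
  intro V hV X hX Y _ Z _
  have hd : -π ⁅V - π V, X - π X⁆ ∈ H := by
    rw [hH]
    exact neg_mem (Submodule.subset_span ⟨_, hπm V, _, hπm X, rfl⟩)
  refine projTri_projMul_of_commute π
    (proj_lie_eq_lie_proj hG0m.disjoint hπ0 hπm (hH0 _ hd) (hHm _ hd)) (fun W => ?_) Y Z
  have hfix : π ⁅π V, π X⁆ = ⁅π V, π X⁆ :=
    proj_eq_self_of_mem_s4 hG0m.disjoint hπ0 hπm (h00 _ (hπ0 V) _ (hπ0 X))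
  rw [projTri_eq_lie, lie_sub_proj_sub_proj, h11 V hV X hX, zero_add, map_sub π ⁅π V, π X⁆, hfix,
    neg_sub]

/-- Let `G = G0 ⊕ G1` be a Z2-graded Lie algebra with `[G1,G1] = 0`,
let `G₋` be a subspace complement of `G0` with projection `π₊` onto `G0` along `G₋`,
and let `H = span{π₊([a,b]) : a,b ∈ G₋}` satisfy `[H,G0] ⊆ G0`, `[H,G₋] ⊆ G₋`.
Then `X*Y = [π₊(X),Y]` satisfies the SS-identity (3.1) on `G1`. -/
theorem stmt_4 {k G : Type*} [Field k] [LieRing G] [LieAlgebra k G]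
    (G0 G1 Gm : Submodule k G)
    (hG01 : IsCompl G0 G1)
    (h00 : ∀ x ∈ G0, ∀ y ∈ G0, ⁅x, y⁆ ∈ G0)
    (h01 : ∀ x ∈ G0, ∀ y ∈ G1, ⁅x, y⁆ ∈ G1)
    (h11 : ∀ x ∈ G1, ∀ y ∈ G1, ⁅x, y⁆ = 0)
    (hG0m : IsCompl G0 Gm)
    (π : G →ₗ[k] G)
    (hπ0 : ∀ x, π x ∈ G0)
    (hπm : ∀ x, x - π x ∈ Gm)
    (H : Submodule k G)
    (hH : H = Submodule.span k {x | ∃ a ∈ Gm, ∃ b ∈ Gm, x = π ⁅a, b⁆})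
    (hH0 : ∀ h ∈ H, ∀ x ∈ G0, ⁅h, x⁆ ∈ G0)
    (hHm : ∀ h ∈ H, ∀ x ∈ Gm, ⁅h, x⁆ ∈ Gm)
    (mul : G → G → G)
    (hmul : ∀ X Y, mul X Y = ⁅π X, Y⁆)
    (As : G → G → G → G)
    (hAs : ∀ X Y Z, As X Y Z = mul (mul X Y) Z - mul X (mul Y Z))
    (tri : G → G → G → G)
    (htri : ∀ X Y Z, tri X Y Z = As X Y Z - As Y X Z) :
    ∀ V ∈ G1, ∀ X ∈ G1, ∀ Y ∈ G1, ∀ Z ∈ G1,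
      tri V X (mul Y Z) = mul (tri V X Y) Z + mul Y (tri V X Z) :=
  stmt_4_general G0 G1 Gm h00 h11 hG0m π hπ0 hπm H hH hH0 hHm mul hmul As hAs tri htri
end

section
/- Let A be an SS-algebra over a field k (an algebra satisfying [V,X,Y*Z] = [V,X,Y]*Z + Y*[V,X,Z] for all V,X,Y,Z, with [X,Y,Z] = As(X,Y,Z) − As(Y,X,Z)). With K_{YZ} = [L_Y, L_Z] − L_{Y*Z} + L_{Z*Y}, one has for all Y, Z, U, V ∈ A the identity [K_{YZ}, K_{UV}] = K_{K_{YZ}(U), V} + K_{U, K_{YZ}(V)}; consequently the linear span of the operators {K_{YZ} : Y, Z ∈ A} is a Lie subalgebra of End(A) under the commutator bracket. -/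
/-- In an SS-algebra `A`, with `K_{YZ} = [L_Y,L_Z] − L_{Y*Z} + L_{Z*Y}`,
one has `[K_{YZ}, K_{UV}] = K_{K_{YZ}(U),V} + K_{U,K_{YZ}(V)}`; consequently the
linear span of the `K_{YZ}` is a Lie subalgebra of `End(A)` under commutators. -/
theorem stmt_6 {k A : Type*} [Field k] [AddCommGroup A] [Module k A]
    (mul : A →ₗ[k] A →ₗ[k] A)
    (As : A → A → A → A)
    (hAs : ∀ X Y Z, As X Y Z = mul (mul X Y) Z - mul X (mul Y Z))
    (tri : A → A → A → A)
    (htri : ∀ X Y Z, tri X Y Z = As X Y Z - As Y X Z)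
    (hSS : ∀ V X Y Z, tri V X (mul Y Z) = mul (tri V X Y) Z + mul Y (tri V X Z))
    (K : A → A → Module.End k A)
    (hK : ∀ Y Z, K Y Z = ⁅mul Y, mul Z⁆ - mul (mul Y Z) + mul (mul Z Y)) :
    (∀ Y Z U V, ⁅K Y Z, K U V⁆ = K (K Y Z U) V + K U (K Y Z V)) ∧
    (∀ f ∈ Submodule.span k (Set.range fun p : A × A => K p.1 p.2),
      ∀ g ∈ Submodule.span k (Set.range fun p : A × A => K p.1 p.2),
        ⁅f, g⁆ ∈ Submodule.span k (Set.range fun p : A × A => K p.1 p.2)) := by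
  letI : LieRing (Module.End k A) := LieRing.ofAssociativeRing
  letI : LieAlgebra k (Module.End k A) := LieAlgebra.ofAssociativeAlgebra
  -- K Y Z is a derivation
  have der : ∀ Y Z a b : A, K Y Z (mul a b) = mul (K Y Z a) b + mul a (K Y Z b) := by
    intro Y Z a b
    have h := hSS Z Y a b
    simp only [htri, hAs, hK, Ring.lie_def, LinearMap.sub_apply, LinearMap.add_apply,
      Module.End.mul_apply, map_sub, map_add, LinearMap.sub_apply, LinearMap.add_apply] at h ⊢
    linear_combination (norm := module) h
  have lieL : ∀ Y Z a : A, ⁅K Y Z, mul a⁆ = mul (K Y Z a) := by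
    intro Y Z a
    ext w
    simp only [Ring.lie_def, LinearMap.sub_apply, Module.End.mul_apply, der]
    abel
  have main : ∀ Y Z U V, ⁅K Y Z, K U V⁆ = K (K Y Z U) V + K U (K Y Z V) := by
    intro Y Z U V
    have e1 : ⁅K Y Z, K U V⁆ = ⁅⁅K Y Z, mul U⁆, mul V⁆ + ⁅mul U, ⁅K Y Z, mul V⁆⁆
        - ⁅K Y Z, mul (mul U V)⁆ + ⁅K Y Z, mul (mul V U)⁆ := by
      rw [hK U V, lie_add, lie_sub, leibniz_lie]
    rw [e1, lieL, lieL, lieL, lieL, der, der, hK (K Y Z U) V, hK U (K Y Z V),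
      map_add, map_add]
    abel
  refine ⟨main, ?_⟩
  intro f hf g hg
  set S := Submodule.span k (Set.range fun p : A × A => K p.1 p.2) with hS
  have hgen : ∀ a b : A, K a b ∈ S := fun a b =>
    Submodule.subset_span ⟨(a, b), rfl⟩
  have step : ∀ u v : A, ∀ f ∈ S, ⁅f, K u v⁆ ∈ S := by
    intro u v f hf
    induction hf using Submodule.span_induction with
    | mem x hx =>
      obtain ⟨⟨y, z⟩, rfl⟩ := hx
      rw [main y z u v]
      exact add_mem (hgen _ _) (hgen _ _)
    | zero => simp only [zero_lie, lie_zero]; exact S.zero_mem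
    | add x y _ _ hx hy => rw [add_lie]; exact add_mem hx hy
    | smul c x _ hx => rw [smul_lie]; exact S.smul_mem c hx
  induction hg using Submodule.span_induction with
  | mem x hx =>
    obtain ⟨⟨u, v⟩, rfl⟩ := hx
    exact step u v f hf
  | zero => simp only [zero_lie, lie_zero]; exact S.zero_mem
  | add x y _ _ hx hy => rw [lie_add]; exact add_mem hx hy
  | smul c x _ hx => rw [lie_smul]; exact S.smul_mem c hx
end

section
/- Let G be a Z2-graded Lie algebra over a field k (G = G0 ⊕ G1 as vector spaces, [G0,G0] ⊆ G0, [G0,G1] ⊆ G1, [G1,G1] ⊆ G0) and let R : G1 → G0 be a linear map. Define G₋ = {m − R(m) : m ∈ G1}. Then G₋ is closed under the Lie bracket of G (i.e. is a Lie subalgebra) if and only if R satisfies the modified Yang-Baxter equation (1.3): R([R(X),Y] − [R(Y),X]) − [R(X),R(Y)] − [X,Y] = 0 for all X, Y ∈ G1. -/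
/-!
Writing `X₋ = X - R X` for `X ∈ G1`, the bracket `⁅X₋, Y₋⁆` splits into the odd part
`u = ⁅R Y, X⁆ - ⁅R X, Y⁆` and the even part `v = ⁅X, Y⁆ + ⁅R X, R Y⁆`. Since `G0 ⊕ G1` is direct
and `R` sends `G1` to `G0`, an element `u + v` lies in `G₋` exactly when `v = -R u`, and this is
the modified Yang-Baxter equation for `X, Y`.
-/

theorem exists_add_eq_sub_iff_of_disjoint {k M : Type*} [Ring k] [AddCommGroup M] [Module k M]
    {G0 G1 : Submodule k M} (hG : Disjoint G0 G1) {R : M → M} (hR : ∀ x ∈ G1, R x ∈ G0)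
    {u v : M} (hu : u ∈ G1) (hv : v ∈ G0) :
    (∃ m ∈ G1, u + v = m - R m) ↔ v = -R u := by
  constructor
  · rintro ⟨m, hm, h⟩
    have hdiff : u - m = -R m - v := by rw [sub_eq_sub_iff_add_eq_add, h]; abel
    have hzero : u - m = 0 := (Submodule.disjoint_def.mp hG) _
      (hdiff ▸ sub_mem (neg_mem (hR m hm)) hv) (sub_mem hu hm)
    obtain rfl : u = m := sub_eq_zero.mp hzero
    rw [sub_self, eq_comm, sub_eq_zero] at hdiff
    exact hdiff.symm
  · rintro rfl
    exact ⟨u, hu, sub_eq_add_neg u (R u) |>.symm⟩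

theorem lie_sub_sub_eq {L : Type*} [LieRing L] (X Y A B : L) :
    ⁅X - A, Y - B⁆ = (⁅B, X⁆ - ⁅A, Y⁆) + (⁅X, Y⁆ + ⁅A, B⁆) := by
  rw [lie_sub, sub_lie, sub_lie, ← lie_skew B X]
  abel

theorem lie_sub_map_mem_iff {k G : Type*} [CommRing k] [LieRing G] [LieAlgebra k G]
    {G0 G1 : Submodule k G} (hG : Disjoint G0 G1)
    (h00 : ∀ x ∈ G0, ∀ y ∈ G0, ⁅x, y⁆ ∈ G0)
    (h01 : ∀ x ∈ G0, ∀ y ∈ G1, ⁅x, y⁆ ∈ G1)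
    (h11 : ∀ x ∈ G1, ∀ y ∈ G1, ⁅x, y⁆ ∈ G0)
    {R : G →ₗ[k] G} (hR : ∀ x ∈ G1, R x ∈ G0) {X Y : G} (hX : X ∈ G1) (hY : Y ∈ G1) :
    (∃ m ∈ G1, ⁅X - R X, Y - R Y⁆ = m - R m) ↔
      R (⁅R X, Y⁆ - ⁅R Y, X⁆) - ⁅R X, R Y⁆ - ⁅X, Y⁆ = 0 := by
  rw [lie_sub_sub_eq, exists_add_eq_sub_iff_of_disjoint hG hR
    (sub_mem (h01 _ (hR Y hY) _ hX) (h01 _ (hR X hX) _ hY))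
    (add_mem (h11 _ hX _ hY) (h00 _ (hR X hX) _ (hR Y hY))),
    ← map_neg, neg_sub, sub_sub, sub_eq_zero, add_comm, eq_comm]

/-- For a Z2-graded Lie algebra `G = G0 ⊕ G1` and a linear map
`R : G1 → G0`, the subspace `G₋ = {m − R(m) : m ∈ G1}` is closed under the
Lie bracket iff `R` satisfies the modified Yang-Baxter equation (1.3). -/
theorem stmt_8 {k G : Type*} [Field k] [LieRing G] [LieAlgebra k G]
    (G0 G1 : Submodule k G)
    (hG01 : IsCompl G0 G1)
    (h00 : ∀ x ∈ G0, ∀ y ∈ G0, ⁅x, y⁆ ∈ G0)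
    (h01 : ∀ x ∈ G0, ∀ y ∈ G1, ⁅x, y⁆ ∈ G1)
    (h11 : ∀ x ∈ G1, ∀ y ∈ G1, ⁅x, y⁆ ∈ G0)
    (R : G →ₗ[k] G)
    (hR : ∀ x ∈ G1, R x ∈ G0)
    (Gm : Set G)
    (hGm : Gm = {y | ∃ m ∈ G1, y = m - R m}) :
    (∀ a ∈ Gm, ∀ b ∈ Gm, ⁅a, b⁆ ∈ Gm) ↔
      (∀ X ∈ G1, ∀ Y ∈ G1,
        R (⁅R X, Y⁆ - ⁅R Y, X⁆) - ⁅R X, R Y⁆ - ⁅X, Y⁆ = 0) := by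
  subst hGm
  have hmem X (hX : X ∈ G1) Y (hY : Y ∈ G1) :=
    lie_sub_map_mem_iff hG01.disjoint h00 h01 h11 hR hX hY
  constructor
  · intro hclosed X hX Y hY
    exact (hmem X hX Y hY).mp (hclosed _ ⟨X, hX, rfl⟩ _ ⟨Y, hY, rfl⟩)
  · rintro hYB _ ⟨X, hX, rfl⟩ _ ⟨Y, hY, rfl⟩
    exact (hmem X hX Y hY).mpr (hYB X hX Y hY)
end

section
/- Let G be a Z2-graded Lie algebra over a field k (G = G0 ⊕ G1 as vector spaces, [G0,G0] ⊆ G0, [G0,G1] ⊆ G1, [G1,G1] ⊆ G0), let R : G1 → G0 be linear, set G₊ = G0, G₋ = {m − R(m) : m ∈ G1}, and for X, Y ∈ G1 define D(X,Y) = R([R(X),Y] − [R(Y),X]) − [R(X),R(Y)] − [X,Y] ∈ G0. Let π₊ : G → G₊ be the projection onto G₊ along G₋ and let H be the linear span of {π₊([a,b]) : a, b ∈ G₋} (in this situation H equals the span of all D(X,Y)). Then the conditions (0.9): [H, G₊] ⊆ G₊ and [H, G₋] ⊆ G₋ hold if and only if [D(X,Y), R(Z)] = R([D(X,Y), Z])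 for all X, Y, Z ∈ G1. -/
/-!
Write `G₋ = (id - R) G1`. Since `G0 ∩ G1 = 0`, an element `a - b` with `a ∈ G1`, `b ∈ G0` lies in
`G₋` exactly when `b = R a`. Expanding the bracket gives
`⁅X - R X, Y - R Y⁆ = -D(X,Y) - (W - R W)` with `W = ⁅R X, Y⁆ - ⁅R Y, X⁆ ∈ G1`, so
`π₊⁅X - R X, Y - R Y⁆ = -D(X,Y)` and `H` is spanned by the `D(X,Y) ∈ G0`. Such an element
preserves `G0` automatically, and `⁅D, Z - R Z⁆ = ⁅D, Z⁆ - ⁅D, R Z⁆` lies in `G₋` exactly when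
`⁅D, R Z⁆ = R ⁅D, Z⁆`.
-/

section LieStabilizer

variable {k G : Type*} [CommRing k] [LieRing G] [LieAlgebra k G]

def lieStabilizer (N : Submodule k G) : Submodule k G :=
  (Submodule.compatibleMaps N N).comap (LieModule.toEnd k G G : G →ₗ[k] Module.End k G)

theorem mem_lieStabilizer {N : Submodule k G} {h : G} :
    h ∈ lieStabilizer N ↔ ∀ x ∈ N, ⁅h, x⁆ ∈ N :=
  Iff.rfl

end LieStabilizer

namespace GradedComplement

variable {k G : Type*} [CommRing k] [LieRing G] [LieAlgebra k G]
  {G0 G1 : Submodule k G} {R : G →ₗ[k] G}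

def defect (R : G →ₗ[k] G) (X Y : G) : G :=
  R (⁅R X, Y⁆ - ⁅R Y, X⁆) - ⁅R X, R Y⁆ - ⁅X, Y⁆

section Complement

variable (hG01 : Disjoint G0 G1) (hR : ∀ x ∈ G1, R x ∈ G0)
include hG01 hR

theorem sub_mem_map_id_sub_iff {a b : G} (ha : a ∈ G1) (hb : b ∈ G0) :
    a - b ∈ G1.map (LinearMap.id - R) ↔ R a = b := by
  constructor
  · rintro ⟨m, hm, hme⟩
    simp only [LinearMap.sub_apply, LinearMap.id_apply] at hme
    have hma : m - a = R m - b := by rw [sub_eq_sub_iff_sub_eq_sub, hme]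
    have : m - a = 0 :=
      Submodule.disjoint_def.mp hG01 _ (hma ▸ G0.sub_mem (hR m hm) hb) (G1.sub_mem hm ha)
    rwa [sub_eq_zero.mp this, sub_self, eq_comm, sub_eq_zero] at hma
  · rintro rfl
    exact ⟨a, ha, rfl⟩

theorem eq_zero_of_mem_of_mem_map_id_sub {g : G} (hg : g ∈ G0)
    (hg' : g ∈ G1.map (LinearMap.id - R)) : g = 0 := by
  have := (sub_mem_map_id_sub_iff hG01 hR G1.zero_mem (G0.neg_mem hg)).mp (by simpa using hg')
  simpa [eq_comm] using this

theorem proj_eq_of_sub_mem {π : G →ₗ[k] G} (hπ0 : ∀ x, π x ∈ G0)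
    (hπm : ∀ x, x - π x ∈ G1.map (LinearMap.id - R)) {x u : G} (hu : u ∈ G0)
    (hxu : x - u ∈ G1.map (LinearMap.id - R)) : π x = u := by
  have h : π x - u ∈ G1.map (LinearMap.id - R) := by
    simpa using Submodule.sub_mem _ hxu (hπm x)
  exact sub_eq_zero.mp (eq_zero_of_mem_of_mem_map_id_sub hG01 hR (G0.sub_mem (hπ0 x) hu) h)

end Complement

theorem lie_sub_apply_sub_apply (X Y : G) :
    ⁅X - R X, Y - R Y⁆ = -defect R X Y -
      (LinearMap.id - R : G →ₗ[k] G) (⁅R X, Y⁆ - ⁅R Y, X⁆) := by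
  simp only [defect, lie_sub, sub_lie, map_sub, LinearMap.sub_apply, LinearMap.id_apply]
  rw [← lie_skew X (R Y)]
  abel

section Graded

variable (hG01 : Disjoint G0 G1) (hR : ∀ x ∈ G1, R x ∈ G0)
  (h00 : ∀ x ∈ G0, ∀ y ∈ G0, ⁅x, y⁆ ∈ G0) (h01 : ∀ x ∈ G0, ∀ y ∈ G1, ⁅x, y⁆ ∈ G1)
  (h11 : ∀ x ∈ G1, ∀ y ∈ G1, ⁅x, y⁆ ∈ G0)

include hR h00 h01 h11 in
theorem defect_mem {X Y : G} (hX : X ∈ G1) (hY : Y ∈ G1) : defect R X Y ∈ G0 :=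
  G0.sub_mem (G0.sub_mem (hR _ (G1.sub_mem (h01 _ (hR X hX) _ hY) (h01 _ (hR Y hY) _ hX)))
    (h00 _ (hR X hX) _ (hR Y hY))) (h11 _ hX _ hY)

include hG01 hR h00 h01 h11 in
theorem proj_lie_eq_neg_defect {π : G →ₗ[k] G} (hπ0 : ∀ x, π x ∈ G0)
    (hπm : ∀ x, x - π x ∈ G1.map (LinearMap.id - R)) {X Y : G} (hX : X ∈ G1) (hY : Y ∈ G1) :
    π ⁅X - R X, Y - R Y⁆ = -defect R X Y := by
  refine proj_eq_of_sub_mem hG01 hR hπ0 hπm (G0.neg_mem (defect_mem hR h00 h01 h11 hX hY)) ?_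
  rw [lie_sub_apply_sub_apply, sub_sub_cancel_left]
  exact Submodule.neg_mem _ <| Submodule.mem_map_of_mem <|
    G1.sub_mem (h01 _ (hR X hX) _ hY) (h01 _ (hR Y hY) _ hX)

include hG01 hR h00 h01 h11 in
theorem span_proj_lie_le_iff {π : G →ₗ[k] G} (hπ0 : ∀ x, π x ∈ G0)
    (hπm : ∀ x, x - π x ∈ G1.map (LinearMap.id - R)) {S : Submodule k G} :
    Submodule.span k {x | ∃ a ∈ G1.map (LinearMap.id - R), ∃ b ∈ G1.map (LinearMap.id - R),
      x = π ⁅a, b⁆} ≤ S ↔ ∀ X ∈ G1, ∀ Y ∈ G1, defect R X Y ∈ S := by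
  have hproj : ∀ {X Y}, X ∈ G1 → Y ∈ G1 → π ⁅X - R X, Y - R Y⁆ = -defect R X Y :=
    proj_lie_eq_neg_defect hG01 hR h00 h01 h11 hπ0 hπm
  rw [Submodule.span_le]
  constructor
  · intro h X hX Y hY
    have := h ⟨X - R X, ⟨X, hX, rfl⟩, Y - R Y, ⟨Y, hY, rfl⟩, rfl⟩
    rwa [SetLike.mem_coe, hproj hX hY, Submodule.neg_mem_iff] at this
  · rintro h _ ⟨_, ⟨X, hX, rfl⟩, _, ⟨Y, hY, rfl⟩, rfl⟩
    simp only [LinearMap.sub_apply, LinearMap.id_apply]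
    rw [SetLike.mem_coe, hproj hX hY, Submodule.neg_mem_iff]
    exact h X hX Y hY

include hG01 hR h00 h01 in
theorem mem_lieStabilizer_map_id_sub_iff {d : G} (hd : d ∈ G0) :
    d ∈ lieStabilizer (G1.map (LinearMap.id - R)) ↔ ∀ Z ∈ G1, ⁅d, R Z⁆ = R ⁅d, Z⁆ := by
  have key : ∀ Z ∈ G1, ⁅d, (LinearMap.id - R : G →ₗ[k] G) Z⁆ ∈ G1.map (LinearMap.id - R) ↔
      ⁅d, R Z⁆ = R ⁅d, Z⁆ := fun Z hZ ↦ by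
    rw [LinearMap.sub_apply, LinearMap.id_apply, lie_sub, eq_comm]
    exact sub_mem_map_id_sub_iff hG01 hR (h01 d hd Z hZ) (h00 d hd _ (hR Z hZ))
  rw [mem_lieStabilizer]
  constructor
  · exact fun h Z hZ ↦ (key Z hZ).mp (h _ ⟨Z, hZ, rfl⟩)
  · rintro h _ ⟨Z, hZ, rfl⟩
    exact (key Z hZ).mpr (h Z hZ)

end Graded

end GradedComplement

open GradedComplement in
/-- With `G = G0 ⊕ G1` Z2-graded, `R : G1 → G0` linear, `G₊ = G0`,
`G₋ = {m − R(m) : m ∈ G1}`, `π₊` the projection onto `G₊` along `G₋`,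
`H = span{π₊([a,b]) : a,b ∈ G₋}`, and
`D(X,Y) = R([R X,Y] − [R Y,X]) − [R X,R Y] − [X,Y]`, the conditions (0.9)
`[H,G₊] ⊆ G₊` and `[H,G₋] ⊆ G₋` hold iff
`[D(X,Y), R(Z)] = R([D(X,Y), Z])` for all `X,Y,Z ∈ G1`. -/
theorem stmt_9 {k G : Type*} [Field k] [LieRing G] [LieAlgebra k G]
    (G0 G1 : Submodule k G)
    (hG01 : IsCompl G0 G1)
    (h00 : ∀ x ∈ G0, ∀ y ∈ G0, ⁅x, y⁆ ∈ G0)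
    (h01 : ∀ x ∈ G0, ∀ y ∈ G1, ⁅x, y⁆ ∈ G1)
    (h11 : ∀ x ∈ G1, ∀ y ∈ G1, ⁅x, y⁆ ∈ G0)
    (R : G →ₗ[k] G)
    (hR : ∀ x ∈ G1, R x ∈ G0)
    (Gm : Submodule k G)
    (hGm : Gm = Submodule.map (LinearMap.id - R) G1)
    (π : G →ₗ[k] G)
    (hπ0 : ∀ x, π x ∈ G0)
    (hπm : ∀ x, x - π x ∈ Gm)
    (H : Submodule k G)
    (hH : H = Submodule.span k {x | ∃ a ∈ Gm, ∃ b ∈ Gm, x = π ⁅a, b⁆})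
    (D : G → G → G)
    (hD : ∀ X Y, D X Y = R (⁅R X, Y⁆ - ⁅R Y, X⁆) - ⁅R X, R Y⁆ - ⁅X, Y⁆) :
    ((∀ h ∈ H, ∀ x ∈ G0, ⁅h, x⁆ ∈ G0) ∧
     (∀ h ∈ H, ∀ x ∈ Gm, ⁅h, x⁆ ∈ Gm)) ↔
      (∀ X ∈ G1, ∀ Y ∈ G1, ∀ Z ∈ G1,
        ⁅D X Y, R Z⁆ = R ⁅D X Y, Z⁆) := by
  subst hGm hH
  obtain rfl : D = defect R := funext₂ hD
  have hdisj := hG01.disjoint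
  calc _ ↔ Submodule.span k _ ≤ lieStabilizer G0 ⊓ lieStabilizer (G1.map (LinearMap.id - R)) :=
        le_inf_iff.symm
    _ ↔ ∀ X ∈ G1, ∀ Y ∈ G1,
          defect R X Y ∈ lieStabilizer G0 ⊓ lieStabilizer (G1.map (LinearMap.id - R)) :=
        span_proj_lie_le_iff hdisj hR h00 h01 h11 hπ0 hπm
    _ ↔ _ := by
      refine forall₂_congr fun X hX ↦ forall₂_congr fun Y hY ↦ ?_
      have hd := defect_mem hR h00 h01 h11 hX hY
      rw [Submodule.mem_inf, mem_lieStabilizer_map_id_sub_iff hdisj hR h00 h01 hd,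
        and_iff_right (mem_lieStabilizer.mpr (h00 _ hd))]
end

section
/- Let G be a Lie algebra over a field k decomposed as a direct sum of vector subspaces G = G₁ ⊕ ⋯ ⊕ G_k where each Gᵢ is a Lie subalgebra, and suppose that for every pair i, j the subspace Gᵢ + Gⱼ is closed under the Lie bracket. Let λ₁, …, λ_k ∈ k, let πᵢ : G → Gᵢ be the projection associated with the direct sum decomposition, and set R = λ₁π₁ + ⋯ + λ_kπ_k. Then R satisfies the operator Yang-Baxter equation (1.7): R([R(X),Y] − [R(Y),X]) − [R(X),R(Y)] − R²([X,Y]) = 0 for all X, Y ∈ G. -/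
/-! On `Gᵢ` the operator `R` is the scalar `λᵢ`, so for `X ∈ Gᵢ`, `Y ∈ Gⱼ` the Yang-Baxter
expression reduces to `-(R - λᵢ)(R - λⱼ)⁅X, Y⁆`, which vanishes because `⁅X, Y⁆ ∈ Gᵢ + Gⱼ`
and the commuting factors `R - λᵢ`, `R - λⱼ` kill `Gᵢ` and `Gⱼ`. The expression is
bilinear in `X` and `Y`, so it vanishes everywhere. -/

section

variable {k M ι : Type*} [CommRing k] [AddCommGroup M] [Module k M]

theorem sum_smul_proj_apply_of_mem [Fintype ι] [DecidableEq ι] {N : ι → Submodule k M}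
    {π : ι → M →ₗ[k] M} (hproj : ∀ i j, ∀ x ∈ N j, π i x = if i = j then x else 0)
    (c : ι → k) {i : ι} {z : M} (hz : z ∈ N i) :
    (∑ l, c l • π l) z = c i • z := by
  simp [LinearMap.sum_apply, hproj _ i z hz]

theorem apply_apply_sub_smul_add_smul_eq_zero_of_mem_sup {N : ι → Submodule k M}
    {S : M →ₗ[k] M} {c : ι → k} (hS : ∀ i, ∀ z ∈ N i, S z = c i • z)
    {i j : ι} {z : M} (hz : z ∈ N i ⊔ N j) :
    S (S z) - (c i + c j) • S z + (c i * c j) • z = 0 := by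
  obtain ⟨a, ha, b, hb, rfl⟩ := Submodule.mem_sup.mp hz
  simp only [map_add, map_smul, hS i a ha, hS j b hb]
  module

theorem LinearMap.eq_zero_of_apply_proj_apply_proj_eq_zero [Fintype ι] {P : Type*}
    [AddCommGroup P] [Module k P] (B : M →ₗ[k] M →ₗ[k] P) {π : ι → M →ₗ[k] M}
    (hsum : ∀ x, ∑ i, π i x = x)
    (hB : ∀ i j x y, B (π i x) (π j y) = 0) (x y : M) : B x y = 0 := by
  calc B x y = B (∑ i, π i x) (∑ j, π j y) := by rw [hsum, hsum]
    _ = 0 := by simp only [map_sum, LinearMap.sum_apply, hB, Finset.sum_const_zero]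

end

section

variable {k G ι : Type*} [CommRing k] [LieRing G] [LieAlgebra k G]

def yangBaxterDefect (S : G →ₗ[k] G) : G →ₗ[k] G →ₗ[k] G :=
  LinearMap.mk₂ k (fun X Y => S (⁅S X, Y⁆ - ⁅S Y, X⁆) - ⁅S X, S Y⁆ - S (S ⁅X, Y⁆))
    (fun X X' Y => by simp only [map_add, add_lie, lie_add, map_sub]; abel)
    (fun c X Y => by simp only [map_smul, smul_lie, lie_smul, map_sub]; module)
    (fun X Y Y' => by simp only [map_add, add_lie, lie_add, map_sub]; abel)
    (fun c X Y => by simp only [map_smul, smul_lie, lie_smul, map_sub]; module)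

theorem yangBaxterDefect_eq_zero_of_mem {N : ι → Submodule k G} {S : G →ₗ[k] G} {c : ι → k}
    (hS : ∀ i, ∀ z ∈ N i, S z = c i • z) {i j : ι} {X Y : G} (hX : X ∈ N i) (hY : Y ∈ N j)
    (hXY : ⁅X, Y⁆ ∈ N i ⊔ N j) : yangBaxterDefect S X Y = 0 := by
  have hquad := apply_apply_sub_smul_add_smul_eq_zero_of_mem_sup hS hXY
  simp only [yangBaxterDefect, LinearMap.mk₂_apply, hS i X hX, hS j Y hY, smul_lie, lie_smul,
    ← lie_skew Y X, map_sub, map_smul, map_neg] at hquad ⊢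
  rw [← neg_eq_zero, ← hquad]
  module

end

theorem stmt_10_general {k G : Type*} [Field k] [LieRing G] [LieAlgebra k G]
    (K : ℕ) (Gs : Fin K → Submodule k G)
    (π : Fin K → (G →ₗ[k] G))
    (hmem : ∀ i x, π i x ∈ Gs i)
    (hsum : ∀ x, ∑ i, π i x = x)
    (hproj : ∀ i j, ∀ x ∈ Gs j, π i x = if i = j then x else 0)
    (hpair : ∀ i j, ∀ x ∈ Gs i ⊔ Gs j, ∀ y ∈ Gs i ⊔ Gs j, ⁅x, y⁆ ∈ Gs i ⊔ Gs j)
    (lam : Fin K → k)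
    (R : G → G)
    (hR : ∀ x, R x = ∑ i, lam i • π i x) :
    ∀ X Y, R (⁅R X, Y⁆ - ⁅R Y, X⁆) - ⁅R X, R Y⁆ - R (R ⁅X, Y⁆) = 0 := by
  set S : G →ₗ[k] G := ∑ i, lam i • π i
  have hRS : R = S := funext fun x => by simp [hR, S, LinearMap.sum_apply]
  subst hRS
  have hS : ∀ i, ∀ z ∈ Gs i, S z = lam i • z := fun i z hz =>
    sum_smul_proj_apply_of_mem hproj lam hz
  intro X Y
  refine (yangBaxterDefect S).eq_zero_of_apply_proj_apply_proj_eq_zero hsum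
    (fun i j x y => ?_) X Y
  have hbracket : ⁅π i x, π j y⁆ ∈ Gs i ⊔ Gs j :=
    hpair i j _ (Submodule.mem_sup_left (hmem i x)) _ (Submodule.mem_sup_right (hmem j y))
  exact yangBaxterDefect_eq_zero_of_mem hS (hmem i x) (hmem j y) hbracket

/-- If a Lie algebra `G` decomposes as a direct sum of subalgebras
`G₁ ⊕ ⋯ ⊕ G_K` such that each pairwise sum `Gᵢ + Gⱼ` is closed under the bracket,
then `R = λ₁π₁ + ⋯ + λ_Kπ_K` satisfies the operator Yang-Baxter equation (1.7). -/
theorem stmt_10 {k G : Type*} [Field k] [LieRing G] [LieAlgebra k G]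
    (K : ℕ) (Gs : Fin K → Submodule k G)
    (π : Fin K → (G →ₗ[k] G))
    (hmem : ∀ i x, π i x ∈ Gs i)
    (hsum : ∀ x, ∑ i, π i x = x)
    (hproj : ∀ i j, ∀ x ∈ Gs j, π i x = if i = j then x else 0)
    (hsub : ∀ i, ∀ x ∈ Gs i, ∀ y ∈ Gs i, ⁅x, y⁆ ∈ Gs i)
    (hpair : ∀ i j, ∀ x ∈ Gs i ⊔ Gs j, ∀ y ∈ Gs i ⊔ Gs j, ⁅x, y⁆ ∈ Gs i ⊔ Gs j)
    (lam : Fin K → k)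
    (R : G → G)
    (hR : ∀ x, R x = ∑ i, lam i • π i x) :
    ∀ X Y, R (⁅R X, Y⁆ - ⁅R Y, X⁆) - ⁅R X, R Y⁆ - R (R ⁅X, Y⁆) = 0 :=
  stmt_10_general K Gs π hmem hsum hproj hpair lam R hR
end

section
/- Let V be a real inner product space and let C ∈ V be a fixed vector. Define the bilinear multiplication X*Y = ⟨X,Y⟩C + ⟨X,C⟩Y on V. Then this operation is left-symmetric: As(X,Y,Z) = As(Y,X,Z) for all X, Y, Z ∈ V, where As(X,Y,Z) = (X*Y)*Z − X*(Y*Z). -/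
open RealInnerProductSpace

section InnerMul

variable {V : Type*} [NormedAddCommGroup V] [InnerProductSpace ℝ V]

def innerMul (C X Y : V) : V := ⟪X, Y⟫ • C + ⟪X, C⟫ • Y

/-- Both terms are visibly symmetric in `X` and `Y`. -/
theorem innerMul_associator (C X Y Z : V) :
    innerMul C (innerMul C X Y) Z - innerMul C X (innerMul C Y Z) =
      ⟪X, Y⟫ • (⟪C, Z⟫ • C + ⟪C, C⟫ • Z) - (⟪X, C⟫ * ⟪Y, Z⟫ + ⟪Y, C⟫ * ⟪X, Z⟫) • C := by
  simp only [innerMul, inner_add_left, inner_add_right, real_inner_smul_left,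
    real_inner_smul_right, real_inner_comm Z C]
  module

theorem innerMul_associator_comm (C X Y Z : V) :
    innerMul C (innerMul C X Y) Z - innerMul C X (innerMul C Y Z) =
      innerMul C (innerMul C Y X) Z - innerMul C Y (innerMul C X Z) := by
  rw [innerMul_associator, innerMul_associator, real_inner_comm X Y,
    add_comm (⟪X, C⟫ * ⟪Y, Z⟫)]

end InnerMul

/-- On a real inner product space `V` with fixed vector `C`, the
multiplication `X*Y = ⟨X,Y⟩C + ⟨X,C⟩Y` is left-symmetric. -/
theorem stmt_11 {V : Type*} [NormedAddCommGroup V] [InnerProductSpace ℝ V]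
    (C : V)
    (mul : V → V → V)
    (hmul : ∀ X Y, mul X Y = ⟪X, Y⟫ • C + ⟪X, C⟫ • Y)
    (As : V → V → V → V)
    (hAs : ∀ X Y Z, As X Y Z = mul (mul X Y) Z - mul X (mul Y Z)) :
    ∀ X Y Z, As X Y Z = As Y X Z := by
  have hmul' : mul = innerMul C := funext₂ hmul
  intro X Y Z
  rw [hAs, hAs, hmul', innerMul_associator_comm]
end

section
/- Let G be a Lie algebra over a field k and let R : G → G be a linear map satisfying the classical operator Yang-Baxter equation (1.4): R([R(X),Y] − [R(Y),X]) − [R(X),R(Y)] = 0 for all X, Y ∈ G. Then the bilinear operation a*b = [R(a), b] makes G a left-symmetric algebra: As(X,Y,Z) = As(Y,X,Z) for all X, Y, Z ∈ G, where As(X,Y,Z) = (X*Y)*Z − X*(Y*Z). -/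
/-!
By the Jacobi identity, the failure of `a * b = ⁅R a, b⁆` to be left-symmetric is the adjoint action
of the failure of `R` to satisfy the classical Yang-Baxter equation.
-/

theorem lie_associator_sub_swap {G F : Type*} [LieRing G] [FunLike F G G]
    [AddMonoidHomClass F G G] (R : F) (X Y Z : G) :
    (⁅R ⁅R X, Y⁆, Z⁆ - ⁅R X, ⁅R Y, Z⁆⁆) - (⁅R ⁅R Y, X⁆, Z⁆ - ⁅R Y, ⁅R X, Z⁆⁆) =
      ⁅R (⁅R X, Y⁆ - ⁅R Y, X⁆) - ⁅R X, R Y⁆, Z⁆ := by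
  rw [map_sub, sub_lie, sub_lie, lie_lie]
  abel

/-- If `R : G → G` satisfies the classical operator Yang-Baxter
equation (1.4) on a Lie algebra `G`, then `a*b = [R(a),b]` is left-symmetric. -/
theorem stmt_12 {k G : Type*} [Field k] [LieRing G] [LieAlgebra k G]
    (R : G →ₗ[k] G)
    (hYB : ∀ X Y, R (⁅R X, Y⁆ - ⁅R Y, X⁆) - ⁅R X, R Y⁆ = 0)
    (mul : G → G → G)
    (hmul : ∀ a b, mul a b = ⁅R a, b⁆)
    (As : G → G → G → G)
    (hAs : ∀ X Y Z, As X Y Z = mul (mul X Y) Z - mul X (mul Y Z)) :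
    ∀ X Y Z, As X Y Z = As Y X Z := by
  intro X Y Z
  rw [← sub_eq_zero, hAs, hAs]
  simp only [hmul]
  rw [lie_associator_sub_swap, hYB, zero_lie]
end

section
/- Let A be an associative algebra over a field k and let R : A → A be a linear map satisfying the modified Yang-Baxter equation (1.3) with respect to the commutator bracket [a,b] = ab − ba: R([R(X),Y] − [R(Y),X]) − [R(X),R(Y)] − [X,Y] = 0 for all X, Y ∈ A. Then the bilinear operation a*b = ab + ba + [R(a), b] makes A a left-symmetric algebra: As(X,Y,Z) = As(Y,X,Z) for all X, Y, Z ∈ A, where As(X,Y,Z) = (X*Y)*Z − X*(Y*Z). -/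
/-!
Writing `a * b = (R a + a) b - b (R a - a)`, the left multiplication `L_a` of the new product is
left multiplication by `(R + 1) a` minus right multiplication by `(R - 1) a`, and left and right
multiplications commute by associativity. Hence `As(X,Y,Z) - As(Y,X,Z) = (L_{X*Y - Y*X} - [L_X, L_Y]) Z`
vanishes as soon as `R + 1` and `R - 1` carry the bracket `X*Y - Y*X = [R X, Y] - [R Y, X]` to the
commutator, and both of these identities are rearrangements of the modified Yang-Baxter equation.
-/

section LeftSymmetric

variable {A : Type*} [Ring A]

theorem associator_sub_associator_swap (P N : A →+ A) (op : A → A → A)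
    (hop : ∀ a b, op a b = P a * b - b * N a) (X Y Z : A) :
    (op (op X Y) Z - op X (op Y Z)) - (op (op Y X) Z - op Y (op X Z)) =
      (P (op X Y - op Y X) - ⁅P X, P Y⁆) * Z - Z * (N (op X Y - op Y X) - ⁅N X, N Y⁆) := by
  simp only [hop, map_sub, Ring.lie_def]
  noncomm_ring

theorem associator_swap_of_map_lie (P N : A →+ A) (op : A → A → A)
    (hop : ∀ a b, op a b = P a * b - b * N a)
    (hP : ∀ X Y, P (op X Y - op Y X) = ⁅P X, P Y⁆)
    (hN : ∀ X Y, N (op X Y - op Y X) = ⁅N X, N Y⁆) (X Y Z : A) :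
    op (op X Y) Z - op X (op Y Z) = op (op Y X) Z - op Y (op X Z) := by
  have h := associator_sub_associator_swap P N op hop X Y Z
  rwa [hP, hN, sub_self, sub_self, zero_mul, mul_zero, sub_zero, sub_eq_zero] at h

variable (R : A →+ A)
  (hMYB : ∀ X Y, R (⁅R X, Y⁆ - ⁅R Y, X⁆) - ⁅R X, R Y⁆ - ⁅X, Y⁆ = 0)
include hMYB

theorem map_lie_add_id_of_modifiedYangBaxter (X Y : A) :
    (R + .id A) (⁅R X, Y⁆ - ⁅R Y, X⁆) = ⁅(R + .id A) X, (R + .id A) Y⁆ := by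
  simp only [AddMonoidHom.add_apply, AddMonoidHom.id_apply, Ring.lie_def] at hMYB ⊢
  linear_combination (norm := noncomm_ring) hMYB X Y

theorem map_lie_sub_id_of_modifiedYangBaxter (X Y : A) :
    (R - .id A) (⁅R X, Y⁆ - ⁅R Y, X⁆) = ⁅(R - .id A) X, (R - .id A) Y⁆ := by
  simp only [AddMonoidHom.sub_apply, AddMonoidHom.id_apply, Ring.lie_def] at hMYB ⊢
  linear_combination (norm := noncomm_ring) hMYB X Y

end LeftSymmetric

/-- If `A` is an associative algebra and `R : A → A` satisfies the
modified Yang-Baxter equation (1.3) for the commutator bracket, then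
`a*b = ab + ba + [R(a),b]` is a left-symmetric operation. -/
theorem stmt_13 {k A : Type*} [Field k] [Ring A] [Algebra k A]
    (R : A →ₗ[k] A)
    (hMYB : ∀ X Y,
      R ((R X * Y - Y * R X) - (R Y * X - X * R Y)) -
        (R X * R Y - R Y * R X) - (X * Y - Y * X) = 0)
    (mul : A → A → A)
    (hmul : ∀ a b, mul a b = a * b + b * a + (R a * b - b * R a))
    (As : A → A → A → A)
    (hAs : ∀ X Y Z, As X Y Z = mul (mul X Y) Z - mul X (mul Y Z)) :
    ∀ X Y Z, As X Y Z = As Y X Z := by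
  intro X Y Z
  set R' := R.toAddMonoidHom
  have hMYB' : ∀ X Y, R' (⁅R' X, Y⁆ - ⁅R' Y, X⁆) - ⁅R' X, R' Y⁆ - ⁅X, Y⁆ = 0 := by
    simpa only [R', LinearMap.toAddMonoidHom_coe, Ring.lie_def] using hMYB
  have hop : ∀ a b, mul a b = (R' + .id A) a * b - b * (R' - .id A) a := fun a b => by
    simp only [hmul, AddMonoidHom.add_apply, AddMonoidHom.sub_apply, AddMonoidHom.id_apply]
    noncomm_ring
  have hbracket : ∀ X Y, mul X Y - mul Y X = ⁅R' X, Y⁆ - ⁅R' Y, X⁆ := fun X Y => by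
    simp only [hmul, Ring.lie_def]
    noncomm_ring
  rw [hAs, hAs]
  refine associator_swap_of_map_lie _ _ mul hop (fun X Y => ?_) (fun X Y => ?_) X Y Z
  · rw [hbracket]
    exact map_lie_add_id_of_modifiedYangBaxter R' hMYB' X Y
  · rw [hbracket]
    exact map_lie_sub_id_of_modifiedYangBaxter R' hMYB' X Y
end

section
/- For an n×n real matrix X define σ(X) to be the skew-symmetric matrix with entries σ(X)_{ij} = X_{ij} if i > j, σ(X)_{ij} = −X_{ji} if i < j, and σ(X)_{ii} = 0 (so that X − σ(X) is upper triangular; this is the unique decomposition of X into a skew-symmetric plus an upper-triangular matrix). On the space of symmetric n×n real matrices define X*Y = σ(X)Y − Yσ(X) (which is again symmetric). Then for all symmetric matrices X, Y, Z, V the identities (2.6): [X,Y,Z] + [Y,Z,X] + [Z,X,Y] = 0 and (2.7): V*[X,Y,Z] = [V*X,Y,Z] + [X,V*Y,Z] + [X,Y,V*Z] hold, where [X,Y,Z] = As(X,Y,Z) − As(Y,X,Z) and As(X,Y,Z) = (X*Y)*Z − X*(Y*Z); that is, the symmetric matrices with this operation form a G-algebra. -/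
open Matrix

section Aux

variable {n : ℕ}

private lemma sig_skew (σ : Matrix (Fin n) (Fin n) ℝ → Matrix (Fin n) (Fin n) ℝ)
    (hσ : ∀ X i j, σ X i j = if j < i then X i j else if i < j then -X j i else 0)
    (M : Matrix (Fin n) (Fin n) ℝ) : (σ M)ᵀ = -(σ M) := by
  ext i j
  simp only [transpose_apply, Matrix.neg_apply, hσ]
  rcases lt_trichotomy i j with h | h | h
  · simp [h, not_lt.mpr h.le]
  · simp [h]
  · simp [h, not_lt.mpr h.le]

private lemma sig_eq (σ : Matrix (Fin n) (Fin n) ℝ → Matrix (Fin n) (Fin n) ℝ)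
    (hσ : ∀ X i j, σ X i j = if j < i then X i j else if i < j then -X j i else 0)
    (M S : Matrix (Fin n) (Fin n) ℝ) (hS : Sᵀ = -S)
    (hU : ∀ i j, j < i → M i j = S i j) : σ M = S := by
  have hS' : ∀ a b, S b a = -S a b := by
    intro a b
    have := congrFun (congrFun hS a) b
    simpa using this
  ext i j
  rw [hσ]
  rcases lt_trichotomy i j with h | h | h
  · rw [if_neg (not_lt.mpr h.le), if_pos h, hU j i h, hS']
    ring
  · subst h
    rw [if_neg (lt_irrefl i), if_neg (lt_irrefl i)]
    have := hS' i i
    linarith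
  · rw [if_pos h, hU i j h]

private lemma upmul (A B : Matrix (Fin n) (Fin n) ℝ)
    (hA : ∀ i j, j < i → A i j = 0) (hB : ∀ i j, j < i → B i j = 0)
    (i j : Fin n) (hij : j < i) : (A * B) i j = 0 := by
  rw [Matrix.mul_apply]
  apply Finset.sum_eq_zero
  intro k _
  rcases lt_or_ge k i with h | h
  · rw [hA i k h, zero_mul]
  · rw [hB k j (lt_of_lt_of_le hij h), mul_zero]

private lemma key (σ : Matrix (Fin n) (Fin n) ℝ → Matrix (Fin n) (Fin n) ℝ)
    (hσ : ∀ X i j, σ X i j = if j < i then X i j else if i < j then -X j i else 0)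
    (mul : Matrix (Fin n) (Fin n) ℝ → Matrix (Fin n) (Fin n) ℝ →
      Matrix (Fin n) (Fin n) ℝ)
    (hmul : ∀ X Y, mul X Y = σ X * Y - Y * σ X)
    (As : Matrix (Fin n) (Fin n) ℝ → Matrix (Fin n) (Fin n) ℝ →
      Matrix (Fin n) (Fin n) ℝ → Matrix (Fin n) (Fin n) ℝ)
    (hAs : ∀ X Y Z, As X Y Z = mul (mul X Y) Z - mul X (mul Y Z))
    (tri : Matrix (Fin n) (Fin n) ℝ → Matrix (Fin n) (Fin n) ℝ →
      Matrix (Fin n) (Fin n) ℝ → Matrix (Fin n) (Fin n) ℝ)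
    (htri : ∀ X Y Z, tri X Y Z = As X Y Z - As Y X Z)
    (X Y Z : Matrix (Fin n) (Fin n) ℝ) (hX : Xᵀ = X) (hY : Yᵀ = Y) :
    tri X Y Z = (X * Y - Y * X) * Z - Z * (X * Y - Y * X) := by
  -- strictly-lower parts of X - σX and Y - σY vanish
  have hup : ∀ (M : Matrix (Fin n) (Fin n) ℝ) (i j : Fin n), j < i →
      (M - σ M) i j = 0 := by
    intro M i j h
    simp [Matrix.sub_apply, hσ, if_pos h]
  -- σ (mul X Y - mul Y X) = [σX, σY] + [X, Y]
  have hkey : σ (mul X Y - mul Y X) =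
      (σ X * σ Y - σ Y * σ X) + (X * Y - Y * X) := by
    apply sig_eq σ hσ
    · -- skewness
      have h1 : ∀ a b : Fin n, σ X b a = -(σ X a b) := by
        intro a b
        have := congrFun (congrFun (sig_skew σ hσ X) a) b
        simpa using this
      have hsx := sig_skew σ hσ X
      have hsy := sig_skew σ hσ Y
      rw [transpose_add, transpose_sub, transpose_sub, transpose_mul,
        transpose_mul, transpose_mul, transpose_mul, hsx, hsy, hX, hY]
      noncomm_ring
    · -- below-diagonal entries agree: the difference is -[X-σX, Y-σY]
      intro i j h
      have heq : mul X Y - mul Y X -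
          ((σ X * σ Y - σ Y * σ X) + (X * Y - Y * X)) =
          (Y - σ Y) * (X - σ X) - (X - σ X) * (Y - σ Y) := by
        rw [hmul, hmul]
        noncomm_ring
      have h1 := upmul (Y - σ Y) (X - σ X) (hup Y) (hup X) i j h
      have h2 := upmul (X - σ X) (Y - σ Y) (hup X) (hup Y) i j h
      have := congrFun (congrFun heq i) j
      simp only [Matrix.sub_apply, Matrix.add_apply] at this h1 h2 ⊢
      linarith
  -- now expand tri
  rw [htri, hAs, hAs, hmul (mul X Y) Z, hmul X (mul Y Z), hmul (mul Y X) Z,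
    hmul Y (mul X Z), hmul Y Z, hmul X Z]
  have hab : σ (mul X Y) = (σ X * σ Y - σ Y * σ X) + (X * Y - Y * X)
      + σ (mul Y X) := by
    rw [← hkey]
    ext i j
    simp [hσ, Matrix.sub_apply]
    split_ifs <;> ring
  rw [hab]
  noncomm_ring

end Aux

/-- On symmetric n×n real matrices, the operation
`X*Y = σ(X)Y − Yσ(X)`, where `σ(X)` is the skew-symmetric part of the unique
decomposition of `X` into skew-symmetric plus upper-triangular, satisfies the
G-algebra identities (2.6) and (2.7). -/
theorem stmt_15 (n : ℕ)
    (σ : Matrix (Fin n) (Fin n) ℝ → Matrix (Fin n) (Fin n) ℝ)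
    (hσ : ∀ X i j, σ X i j = if j < i then X i j else if i < j then -X j i else 0)
    (mul : Matrix (Fin n) (Fin n) ℝ → Matrix (Fin n) (Fin n) ℝ →
      Matrix (Fin n) (Fin n) ℝ)
    (hmul : ∀ X Y, mul X Y = σ X * Y - Y * σ X)
    (As : Matrix (Fin n) (Fin n) ℝ → Matrix (Fin n) (Fin n) ℝ →
      Matrix (Fin n) (Fin n) ℝ → Matrix (Fin n) (Fin n) ℝ)
    (hAs : ∀ X Y Z, As X Y Z = mul (mul X Y) Z - mul X (mul Y Z))
    (tri : Matrix (Fin n) (Fin n) ℝ → Matrix (Fin n) (Fin n) ℝ →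
      Matrix (Fin n) (Fin n) ℝ → Matrix (Fin n) (Fin n) ℝ)
    (htri : ∀ X Y Z, tri X Y Z = As X Y Z - As Y X Z) :
    ∀ (X Y Z V : Matrix (Fin n) (Fin n) ℝ),
      X.IsSymm → Y.IsSymm → Z.IsSymm → V.IsSymm →
      tri X Y Z + tri Y Z X + tri Z X Y = 0 ∧
      mul V (tri X Y Z) =
        tri (mul V X) Y Z + tri X (mul V Y) Z + tri X Y (mul V Z) := by
  intro X Y Z V hX hY hZ hV
  have hX' : Xᵀ = X := hX
  have hY' : Yᵀ = Y := hY
  have hZ' : Zᵀ = Z := hZ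
  have hV' : Vᵀ = V := hV
  have K := key σ hσ mul hmul As hAs tri htri
  -- mul V X and mul V Y are symmetric
  have hsym : ∀ (A : Matrix (Fin n) (Fin n) ℝ), Aᵀ = A → (mul V A)ᵀ = mul V A := by
    intro A hA
    rw [hmul, transpose_sub, transpose_mul, transpose_mul, hA,
      sig_skew σ hσ V]
    noncomm_ring
  constructor
  · rw [K X Y Z hX' hY', K Y Z X hY' hZ', K Z X Y hZ' hX']
    noncomm_ring
  · rw [K X Y Z hX' hY', K (mul V X) Y Z (hsym X hX') hY',
      K X (mul V Y) Z hX' (hsym Y hY'), K X Y (mul V Z) hX' hY',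
      hmul V ((X * Y - Y * X) * Z - Z * (X * Y - Y * X)),
      hmul V X, hmul V Y, hmul V Z]
    noncomm_ring
end

section
/- Let β ∈ ℝ and let P, Q, R, S : ℝ → ℝ be differentiable functions satisfying the system (1.5): P' = P² − RP − QS, Q' = (β−2)RQ + βPQ, R' = R² − RP − QS, S' = (3−β)RS + (1−β)PS. Then: (i) the function I₁ = RP + QS is constant (its derivative vanishes identically); (ii) if Q(t)S(t) ≠ 0 for all t, the function I₂ = (P − R)/(QS) is constant; (iii) if Q(t) > 0 and S(t) > 0 for all t, the function I₃ = Q^{1−β} S^{−β} (R² − RP − QS) is constant. -/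
/-- First integrals of the system (1.5):
`I₁ = RP + QS` has identically vanishing derivative; if `QS` never vanishes then
`I₂ = (P − R)/(QS)` is constant; if `Q > 0` and `S > 0` then
`I₃ = Q^{1−β} S^{−β} (R² − RP − QS)` is constant. -/
theorem stmt_17 (β : ℝ) (P Q R S : ℝ → ℝ)
    (hP : Differentiable ℝ P) (hQ : Differentiable ℝ Q)
    (hR : Differentiable ℝ R) (hS : Differentiable ℝ S)
    (heqP : ∀ t, deriv P t = P t ^ 2 - R t * P t - Q t * S t)
    (heqQ : ∀ t, deriv Q t = (β - 2) * R t * Q t + β * P t * Q t)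
    (heqR : ∀ t, deriv R t = R t ^ 2 - R t * P t - Q t * S t)
    (heqS : ∀ t, deriv S t = (3 - β) * R t * S t + (1 - β) * P t * S t) :
    (∀ t, deriv (fun u => R u * P u + Q u * S u) t = 0) ∧
    ((∀ t, Q t * S t ≠ 0) →
      ∀ s t, (P s - R s) / (Q s * S s) = (P t - R t) / (Q t * S t)) ∧
    ((∀ t, 0 < Q t) → (∀ t, 0 < S t) →
      ∀ s t,
        Real.rpow (Q s) (1 - β) * Real.rpow (S s) (-β) *
            (R s ^ 2 - R s * P s - Q s * S s) =
          Real.rpow (Q t) (1 - β) * Real.rpow (S t) (-β) *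
            (R t ^ 2 - R t * P t - Q t * S t)) := by
  have hP' : ∀ t, HasDerivAt P (P t ^ 2 - R t * P t - Q t * S t) t := fun t =>
    (heqP t) ▸ (hP t).hasDerivAt
  have hQ' : ∀ t, HasDerivAt Q ((β - 2) * R t * Q t + β * P t * Q t) t := fun t =>
    (heqQ t) ▸ (hQ t).hasDerivAt
  have hR' : ∀ t, HasDerivAt R (R t ^ 2 - R t * P t - Q t * S t) t := fun t =>
    (heqR t) ▸ (hR t).hasDerivAt
  have hS' : ∀ t, HasDerivAt S ((3 - β) * R t * S t + (1 - β) * P t * S t) t := fun t =>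
    (heqS t) ▸ (hS t).hasDerivAt
  have part1 : ∀ t, deriv (fun u => R u * P u + Q u * S u) t = 0 := by
    intro t
    have h : HasDerivAt (fun u => R u * P u + Q u * S u)
        ((R t ^ 2 - R t * P t - Q t * S t) * P t + R t * (P t ^ 2 - R t * P t - Q t * S t)
          + (((β - 2) * R t * Q t + β * P t * Q t) * S t
            + Q t * ((3 - β) * R t * S t + (1 - β) * P t * S t))) t :=
      ((hR' t).mul (hP' t)).add ((hQ' t).mul (hS' t))
    rw [h.deriv]; ring
  refine ⟨part1, ?_, ?_⟩
  · intro hne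
    have key : ∀ t, HasDerivAt (fun u => (P u - R u) / (Q u * S u)) 0 t := by
      intro t
      have h : HasDerivAt (fun u => (P u - R u) / (Q u * S u))
          ((((P t ^ 2 - R t * P t - Q t * S t) - (R t ^ 2 - R t * P t - Q t * S t)) * (Q t * S t)
            - (P t - R t) * (((β - 2) * R t * Q t + β * P t * Q t) * S t
              + Q t * ((3 - β) * R t * S t + (1 - β) * P t * S t))) / (Q t * S t) ^ 2) t :=
        ((hP' t).sub (hR' t)).div ((hQ' t).mul (hS' t)) (hne t)
      convert h using 1
      rw [eq_comm, div_eq_zero_iff]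
      left; ring
    exact fun s t => is_const_of_deriv_eq_zero
      (fun u => (key u).differentiableAt) (fun u => (key u).deriv) s t
  · intro hQpos hSpos
    have key : ∀ t, HasDerivAt
        (fun u => Real.rpow (Q u) (1 - β) * Real.rpow (S u) (-β) *
          (R u ^ 2 - R u * P u - Q u * S u)) 0 t := by
      intro t
      have hQne : Q t ≠ 0 := (hQpos t).ne'
      have hSne : S t ≠ 0 := (hSpos t).ne'
      have hq : HasDerivAt (fun u => Real.rpow (Q u) (1 - β))
          (((β - 2) * R t * Q t + β * P t * Q t) * (1 - β) * Q t ^ (1 - β - 1)) t :=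
        (hQ' t).rpow_const (Or.inl hQne)
      have hs : HasDerivAt (fun u => Real.rpow (S u) (-β))
          (((3 - β) * R t * S t + (1 - β) * P t * S t) * (-β) * S t ^ (-β - 1)) t :=
        (hS' t).rpow_const (Or.inl hSne)
      have hF : HasDerivAt (fun u => R u ^ 2 - R u * P u - Q u * S u)
          (2 * R t ^ 1 * (R t ^ 2 - R t * P t - Q t * S t)
            - ((R t ^ 2 - R t * P t - Q t * S t) * P t
              + R t * (P t ^ 2 - R t * P t - Q t * S t))
            - (((β - 2) * R t * Q t + β * P t * Q t) * S t
              + Q t * ((3 - β) * R t * S t + (1 - β) * P t * S t))) t :=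
        (((hR' t).pow 2).sub ((hR' t).mul (hP' t))).sub ((hQ' t).mul (hS' t))
      have h := (hq.mul hs).mul hF
      convert h using 1
      case e'_4 => rfl
      case e'_5 => rfl
      case e'_8 => rfl
      simp only [Pi.mul_apply, Real.rpow_eq_pow]
      have e1 : Q t ^ (1 - β - 1) = Q t ^ (1 - β) / Q t := by
        rw [Real.rpow_sub_one hQne]
      have e2 : S t ^ (-β - 1) = S t ^ (-β) / S t := by
        rw [Real.rpow_sub_one hSne]
      rw [e1, e2, eq_comm]
      field_simp
      ring
    exact fun s t => is_const_of_deriv_eq_zero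
      (fun u => (key u).differentiableAt) (fun u => (key u).deriv) s t
end

section
/- Let n be a positive integer, α, β, γ, δ ∈ ℝ with associated constants c₁ = α + δ and c₂ = βγ − αδ, and let U, V : ℝ → M_n(ℝ) be matrix-valued functions such that U is twice differentiable, V is differentiable, and they satisfy the system (4.2): U' = αU + βV and V' = [U,V] + γU + δV, where [A,B] = AB − BA. Then U satisfies the second-order equation (4.3): U'' = [U, U'] + c₁ U' + c₂ U. -/
/-! Differentiating `U' = αU + βV` gives `U'' = αU' + βV'`. Substituting the equation for `V'`
and eliminating `V` through `βV = U' - αU` turns `β[U,V]` into `[U,U']` (as `[U,U] = 0`) and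
collects the remaining terms into `(α + δ)U' + (βγ - αδ)U`. -/

theorem smul_add_smul_eq_commutator_of_linear_system {R A : Type*} [CommRing R] [Ring A]
    [Algebra R A] {α β γ δ : R} {U V U' V' : A}
    (hU' : U' = α • U + β • V) (hV' : V' = (U * V - V * U) + γ • U + δ • V) :
    α • U' + β • V' = (U * U' - U' * U) + (α + δ) • U' + (β * γ - α * δ) • U := by
  subst hU' hV'
  simp only [mul_add, add_mul, mul_smul_comm, smul_mul_assoc,
    smul_add, smul_sub, smul_smul]
  match_scalars <;> ring

theorem Matrix.eq_smul_add_smul_of_hasDerivAt_entries {m p : Type*} {α β : ℝ}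
    {U U' U'' V V' : ℝ → Matrix m p ℝ}
    (hU' : ∀ t i j, HasDerivAt (fun s => U s i j) (U' t i j) t)
    (hU'' : ∀ t i j, HasDerivAt (fun s => U' s i j) (U'' t i j) t)
    (hV' : ∀ t i j, HasDerivAt (fun s => V s i j) (V' t i j) t)
    (heqU : ∀ t, U' t = α • U t + β • V t) (t : ℝ) :
    U'' t = α • U' t + β • V' t := by
  ext i j
  have hU'_entry : (fun s => U' s i j) = fun s => α * U s i j + β * V s i j := by
    funext s
    simp [heqU]
  have hderiv : HasDerivAt (fun s => U' s i j) (α * U' t i j + β * V' t i j) t := by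
    rw [hU'_entry]
    exact ((hU' t i j).const_mul α).add ((hV' t i j).const_mul β)
  simpa using (hU'' t i j).unique hderiv

theorem stmt_18_general (n : ℕ) (α β γ δ c₁ c₂ : ℝ)
    (hc₁ : c₁ = α + δ) (hc₂ : c₂ = β * γ - α * δ)
    (U U' U'' V V' : ℝ → Matrix (Fin n) (Fin n) ℝ)
    (hU' : ∀ t i j, HasDerivAt (fun s => U s i j) (U' t i j) t)
    (hU'' : ∀ t i j, HasDerivAt (fun s => U' s i j) (U'' t i j) t)
    (hV' : ∀ t i j, HasDerivAt (fun s => V s i j) (V' t i j) t)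
    (heqU : ∀ t, U' t = α • U t + β • V t)
    (heqV : ∀ t, V' t = (U t * V t - V t * U t) + γ • U t + δ • V t) :
    ∀ t, U'' t = (U t * U' t - U' t * U t) + c₁ • U' t + c₂ • U t := by
  intro t
  rw [Matrix.eq_smul_add_smul_of_hasDerivAt_entries hU' hU'' hV' heqU t, hc₁, hc₂]
  exact smul_add_smul_eq_commutator_of_linear_system (heqU t) (heqV t)

/-- If matrix-valued functions `U, V` satisfy the system (4.2)
`U' = αU + βV`, `V' = [U,V] + γU + δV`, then `U` satisfies the second-order
equation (4.3) `U'' = [U,U'] + c₁U' + c₂U` with `c₁ = α + δ`, `c₂ = βγ − αδ`.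
Differentiation of matrix-valued functions is entrywise. -/
theorem stmt_18 (n : ℕ) (hn : 0 < n) (α β γ δ c₁ c₂ : ℝ)
    (hc₁ : c₁ = α + δ) (hc₂ : c₂ = β * γ - α * δ)
    (U U' U'' V V' : ℝ → Matrix (Fin n) (Fin n) ℝ)
    (hU' : ∀ t i j, HasDerivAt (fun s => U s i j) (U' t i j) t)
    (hU'' : ∀ t i j, HasDerivAt (fun s => U' s i j) (U'' t i j) t)
    (hV' : ∀ t i j, HasDerivAt (fun s => V s i j) (V' t i j) t)
    (heqU : ∀ t, U' t = α • U t + β • V t)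
    (heqV : ∀ t, V' t = (U t * V t - V t * U t) + γ • U t + δ • V t) :
    ∀ t, U'' t = (U t * U' t - U' t * U t) + c₁ • U' t + c₂ • U t :=
  stmt_18_general n α β γ δ c₁ c₂ hc₁ hc₂ U U' U'' V V' hU' hU'' hV' heqU heqV
end

section
/- Let n be a positive integer and c₁, c₂ ∈ ℝ. Let Q : ℝ → M_n(ℝ) be twice differentiable with Q'' = c₁Q' + c₂Q, and let Y, Z : ℝ → M_n(ℝ) be differentiable with Y' = Y·Q(t), Y(t)·Z(t) = 1 and Z(t)·Y(t) = 1 (the identity matrix) for all t. Then U(t) = Y(t)·Q(t)·Z(t) is twice differentiable and satisfies equation (4.3): U'' = [U, U'] + c₁U' + c₂U, where [A,B] = AB − BA. -/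
private lemma entry_mul_deriv {n : ℕ} {A B : ℝ → Matrix (Fin n) (Fin n) ℝ} {A' B' : Matrix (Fin n) (Fin n) ℝ} {t : ℝ}
    (hA : ∀ i j, HasDerivAt (fun s => A s i j) (A' i j) t)
    (hB : ∀ i j, HasDerivAt (fun s => B s i j) (B' i j) t) (i j : Fin n) :
    HasDerivAt (fun s => (A s * B s) i j) ((A' * B t + A t * B') i j) t := by
  simp only [Matrix.mul_apply, Matrix.add_apply]
  rw [← Finset.sum_add_distrib]
  exact HasDerivAt.fun_sum fun k _ => (hA i k).mul (hB k j)

/-- If `Q'' = c₁Q' + c₂Q`, `Y' = Y·Q`, and `Z` is the (differentiable)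
pointwise inverse of `Y`, then `U = Y·Q·Z` is twice differentiable and satisfies
(4.3): `U'' = [U,U'] + c₁U' + c₂U`. Differentiation is entrywise. -/
theorem stmt_19 (n : ℕ) (hn : 0 < n) (c₁ c₂ : ℝ)
    (Q Q' Q'' Y Y' Z : ℝ → Matrix (Fin n) (Fin n) ℝ)
    (hQ' : ∀ t i j, HasDerivAt (fun s => Q s i j) (Q' t i j) t)
    (hQ'' : ∀ t i j, HasDerivAt (fun s => Q' s i j) (Q'' t i j) t)
    (heqQ : ∀ t, Q'' t = c₁ • Q' t + c₂ • Q t)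
    (hY' : ∀ t i j, HasDerivAt (fun s => Y s i j) (Y' t i j) t)
    (heqY : ∀ t, Y' t = Y t * Q t)
    (hZ : ∀ i j, Differentiable ℝ (fun s => Z s i j))
    (hinv₁ : ∀ t, Y t * Z t = 1)
    (hinv₂ : ∀ t, Z t * Y t = 1) :
    ∃ U' U'' : ℝ → Matrix (Fin n) (Fin n) ℝ,
      (∀ t i j, HasDerivAt (fun s => (Y s * Q s * Z s) i j) (U' t i j) t) ∧
      (∀ t i j, HasDerivAt (fun s => U' s i j) (U'' t i j) t) ∧
      (∀ t, U'' t =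
        ((Y t * Q t * Z t) * U' t - U' t * (Y t * Q t * Z t)) +
          c₁ • U' t + c₂ • (Y t * Q t * Z t)) := by
  set D : ℝ → Matrix (Fin n) (Fin n) ℝ := fun t i j => deriv (fun s => Z s i j) t with hDdef
  have hD : ∀ t i j, HasDerivAt (fun s => Z s i j) (D t i j) t :=
    fun t i j => ((hZ i j) t).hasDerivAt
  -- derivative of Y·Z = 1 gives Y'·Z + Y·D = 0
  have hD0 : ∀ t, Y' t * Z t + Y t * D t = 0 := by
    intro t
    ext i j
    have h1 : HasDerivAt (fun s => (Y s * Z s) i j) ((Y' t * Z t + Y t * D t) i j) t :=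
      entry_mul_deriv (hY' t) (hD t) i j
    have h2 : (fun s => (Y s * Z s) i j) = fun _ => (1 : Matrix (Fin n) (Fin n) ℝ) i j := by
      funext s; rw [hinv₁]
    rw [h2] at h1
    have := h1.unique (hasDerivAt_const t _)
    simpa using this
  have hDval : ∀ t, D t = -(Q t * Z t) := by
    intro t
    have h3 : Y t * D t = -(Y' t * Z t) := by
      exact eq_neg_of_add_eq_zero_right (hD0 t)
    calc D t = (Z t * Y t) * D t := by rw [hinv₂, one_mul]
      _ = Z t * (Y t * D t) := by rw [mul_assoc]
      _ = Z t * (-(Y' t * Z t)) := by rw [h3]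
      _ = -(Q t * Z t) := by
          rw [heqY, mul_neg]
          congr 1
          rw [← mul_assoc, ← mul_assoc, hinv₂, one_mul]
  refine ⟨fun t => Y t * Q' t * Z t,
    fun t => (Y' t * Q' t + Y t * Q'' t) * Z t + Y t * Q' t * D t, ?_, ?_, ?_⟩
  · intro t i j
    have h := entry_mul_deriv (B' := D t)
      (entry_mul_deriv (A' := Y' t) (B' := Q' t) (hY' t) (hQ' t)) (hD t) i j
    have key : (Y' t * Q t + Y t * Q' t) * Z t + (Y t * Q t) * D t = Y t * Q' t * Z t := by
      rw [heqY, hDval]; noncomm_ring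
    rw [key] at h
    exact h
  · intro t i j
    exact entry_mul_deriv (B' := D t)
      (entry_mul_deriv (A' := Y' t) (B' := Q'' t) (hY' t) (hQ'' t)) (hD t) i j
  · intro t
    have h1 : Y t * Q t * Z t * (Y t * Q' t * Z t) = Y t * (Q t * Q' t) * Z t := by
      rw [mul_assoc (Y t * Q t) (Z t), ← mul_assoc (Z t) (Y t * Q' t),
        ← mul_assoc (Z t) (Y t), hinv₂, one_mul]
      noncomm_ring
    have h2 : Y t * Q' t * Z t * (Y t * Q t * Z t) = Y t * (Q' t * Q t) * Z t := by
      rw [mul_assoc (Y t * Q' t) (Z t), ← mul_assoc (Z t) (Y t * Q t),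
        ← mul_assoc (Z t) (Y t), hinv₂, one_mul]
      noncomm_ring
    simp only []
    rw [h1, h2, heqY, heqQ, hDval]
    noncomm_ring
end
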